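/- arXiv:0803.1961 — 8 statements merged into one kernel-verified Lean document; each statement's English description precedes it below -/
import Mathlib

section
/- If X_1,...,X_n are i.i.d. uniform on (0,1) and α_i = (α · ∏_{j=1}^k (i-k+j)/(n-k+j))^{1/k} for i = k,...,n with 2 ≤ k ≤ 1/α and 0 < α < 1, then α_i ≥ iα/n for all i = k,...,n. -/
open Finset

/-- If `α_i = (α · ∏_{j=1}^k (i-k+j)/(n-k+j))^{1/k}` for `i = k,…,n` with `2 ≤ k ≤ 1/α`
and `0 < α < 1`, then `α_i ≥ iα/n` for all `i = k,…,n`. -/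
theorem stmt3 (n k : ℕ) (α : ℝ) (hk : 2 ≤ k) (hkn : k ≤ n)
    (hα0 : 0 < α) (hα1 : α < 1) (hkα : (k : ℝ) ≤ 1 / α) :
    ∀ i ∈ Finset.Icc k n,
      (α * ∏ j ∈ Finset.Icc 1 k,
          (((i : ℝ) - k + j) / ((n : ℝ) - k + j))) ^ ((1 : ℝ) / k) ≥
        (i : ℝ) * α / n := by
  intro i hi
  obtain ⟨hki, hin⟩ := Finset.mem_Icc.mp hi
  have hk0 : (0:ℝ) < k := by exact_mod_cast (by omega : 0 < k)
  have hn0 : (0:ℝ) < n := by exact_mod_cast (by omega : 0 < n)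
  have hi0 : (0:ℝ) < i := by exact_mod_cast (by omega : 0 < i)
  have hkiR : (k:ℝ) ≤ i := by exact_mod_cast hki
  have hinR : (i:ℝ) ≤ n := by exact_mod_cast hin
  have hknR : (k:ℝ) ≤ n := by exact_mod_cast hkn
  -- factorwise bound
  have hfac : ∀ j ∈ Finset.Icc 1 k,
      (j:ℝ)/k * ((i:ℝ)/n) ≤ ((i:ℝ) - k + j) / ((n:ℝ) - k + j) := by
    intro j hj
    obtain ⟨hj1, hjk⟩ := Finset.mem_Icc.mp hj
    have hj1R : (1:ℝ) ≤ j := by exact_mod_cast hj1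
    have hjkR : (j:ℝ) ≤ k := by exact_mod_cast hjk
    have hd : (0:ℝ) < (n:ℝ) - k + j := by linarith
    rw [div_mul_div_comm, div_le_div_iff₀ (by positivity) hd]
    nlinarith [
      mul_nonneg (sub_nonneg.2 hjkR) (mul_nonneg hi0.le (le_trans zero_le_one hj1R)),
      mul_nonneg (sub_nonneg.2 hjkR) (mul_nonneg hn0.le (sub_nonneg.2 hkiR))]
  have hPnn : ∀ j ∈ Finset.Icc 1 k, (0:ℝ) ≤ (j:ℝ)/k * ((i:ℝ)/n) := by
    intro j hj; positivity
  have hP : (∏ j ∈ Finset.Icc 1 k, ((j:ℝ)/k * ((i:ℝ)/n)))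
      ≤ ∏ j ∈ Finset.Icc 1 k, (((i:ℝ) - k + j) / ((n:ℝ) - k + j)) :=
    Finset.prod_le_prod hPnn hfac
  have hcard : (Finset.Icc 1 k).card = k := by simp [Nat.card_Icc]
  have hprodid : (∏ j ∈ Finset.Icc 1 k, (j:ℝ)) = (Nat.factorial k : ℝ) := by
    rw [← Nat.cast_prod]
    norm_cast
    rw [← Finset.Ico_add_one_right_eq_Icc]
    exact Finset.prod_Ico_id_eq_factorial k
  have hPval : (∏ j ∈ Finset.Icc 1 k, ((j:ℝ)/k * ((i:ℝ)/n)))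
      = (Nat.factorial k : ℝ) / (k:ℝ)^k * ((i:ℝ)/n)^k := by
    rw [Finset.prod_mul_distrib, Finset.prod_const, hcard, Finset.prod_div_distrib,
      Finset.prod_const, hcard, hprodid]
  -- α bound: α^(k-1) ≤ 1/k^(k-1), and k ≤ k!
  have hαk : α^k * (k:ℝ)^k ≤ α * (Nat.factorial k : ℝ) := by
    have h1 : α * (k:ℝ) ≤ 1 := by
      rw [le_div_iff₀ hα0] at hkα; linarith [mul_comm α (k:ℝ)]
    have h2 : (α * k)^k ≤ 1 := pow_le_one₀ (by positivity) h1
    have h3 : α * (k:ℝ) ≤ α * (Nat.factorial k : ℝ) := by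
      have : (k:ℝ) ≤ (Nat.factorial k : ℝ) := by exact_mod_cast Nat.self_le_factorial k
      nlinarith
    calc α^k * (k:ℝ)^k = (α * k)^(k-1) * (α * k) := by
          rw [← mul_pow, ← pow_succ]
          congr 1; omega
      _ ≤ 1 * (α * k) := by
          have : (α*k)^(k-1) ≤ 1 := pow_le_one₀ (by positivity) h1
          nlinarith [mul_pos hα0 hk0]
      _ ≤ α * (Nat.factorial k : ℝ) := by rw [one_mul]; exact h3
  -- main inequality on k-th powers
  have hstep : ((i:ℝ) * α / n)^k ≤ α * ∏ j ∈ Finset.Icc 1 k,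
      (((i:ℝ) - k + j) / ((n:ℝ) - k + j)) := by
    have e1 : ((i:ℝ) * α / n)^k = α^k * ((i:ℝ)/n)^k := by
      rw [← mul_pow]; ring_nf
    rw [e1]
    have h4 : α^k * ((i:ℝ)/n)^k ≤ α * ((Nat.factorial k : ℝ) / (k:ℝ)^k * ((i:ℝ)/n)^k) := by
      have hin' : (0:ℝ) ≤ ((i:ℝ)/n)^k := by positivity
      have : α^k ≤ α * ((Nat.factorial k : ℝ) / (k:ℝ)^k) := by
        rw [mul_div_assoc'] at *
        rw [le_div_iff₀ (by positivity)]
        linarith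
      nlinarith
    calc α^k * ((i:ℝ)/n)^k ≤ α * ((Nat.factorial k : ℝ) / (k:ℝ)^k * ((i:ℝ)/n)^k) := h4
      _ = α * (∏ j ∈ Finset.Icc 1 k, ((j:ℝ)/k * ((i:ℝ)/n))) := by rw [hPval]
      _ ≤ _ := by
          exact mul_le_mul_of_nonneg_left hP hα0.le
  -- take k-th roots
  have h0 : (0:ℝ) ≤ (i:ℝ) * α / n := by positivity
  have hkne : (k:ℝ) ≠ 0 := ne_of_gt hk0
  have base : ((i:ℝ) * α / n) = (((i:ℝ) * α / n)^(k:ℕ)) ^ ((1:ℝ)/k) := by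
    rw [← Real.rpow_natCast _ k, ← Real.rpow_mul h0, mul_one_div, div_self hkne,
      Real.rpow_one]
  rw [ge_iff_le, base]
  exact Real.rpow_le_rpow (by positivity) hstep (by positivity)
end

section
/- The sequence of critical values α_i = (α · ∏_{j=1}^k j/(n-i+j))^{1/k}, i = k,...,n, satisfies α_i ≥ kα/(n-i+k) for all i = k,...,n whenever 1 ≤ k ≤ 1/α; that is, the generalized Holm critical values based on the k-th order joint distribution under independence dominate the Lehmann–Romano critical values. -/
open Finset

/-- The generalized Holm critical values `α_i = (α · ∏_{j=1}^k j/(n-i+j))^{1/k}` dominate the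
Lehmann–Romano critical values `kα/(n-i+k)` for `i = k,…,n` whenever `1 ≤ k ≤ 1/α`. -/
theorem stmt5 (n k : ℕ) (α : ℝ) (hk : 1 ≤ k) (hkn : k ≤ n)
    (hα0 : 0 < α) (hkα : (k : ℝ) ≤ 1 / α) :
    ∀ i ∈ Finset.Icc k n,
      (α * ∏ j ∈ Finset.Icc 1 k, ((j : ℝ) / ((n : ℝ) - i + j))) ^ ((1 : ℝ) / k) ≥
        (k : ℝ) * α / ((n : ℝ) - i + k) := by
  intro i hi
  obtain ⟨hki, hin⟩ := Finset.mem_Icc.mp hi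
  set c : ℝ := (n : ℝ) - i with hc
  have hc0 : 0 ≤ c := by
    rw [hc, sub_nonneg]
    exact_mod_cast hin
  have hk0 : (0:ℝ) < k := by exact_mod_cast hk
  have hck : (0:ℝ) < c + k := by linarith
  have hβ : 0 ≤ (k:ℝ) * α / (c + k) := by positivity
  have hkα1 : (k:ℝ) * α ≤ 1 := (le_div_iff₀ hα0).mp hkα
  have hfac_pos : ∀ j ∈ Finset.Icc 1 k, (0:ℝ) < (j:ℝ) / (c + j) := by
    intro j hj
    have hj1 := (Finset.mem_Icc.mp hj).1
    have hjp : (0:ℝ) < j := by exact_mod_cast hj1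
    have : (0:ℝ) < c + j := by linarith
    positivity
  have hPpos : (0:ℝ) < ∏ j ∈ Finset.Icc 1 k, ((j:ℝ) / (c + j)) :=
    Finset.prod_pos hfac_pos
  -- key inequality: β^k ≤ α * P
  have hkle : (k:ℝ) ≤ ∏ j ∈ Finset.Icc 1 k, (j:ℝ) := by
    have hnat : k ≤ ∏ j ∈ Finset.Icc 1 k, j :=
      Finset.single_le_prod' (fun j hj => (Finset.mem_Icc.mp hj).1)
        (Finset.mem_Icc.mpr ⟨hk, le_refl k⟩)
    calc (k:ℝ) ≤ ((∏ j ∈ Finset.Icc 1 k, j : ℕ) : ℝ) := by exact_mod_cast hnat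
      _ = ∏ j ∈ Finset.Icc 1 k, (j:ℝ) := by push_cast; rfl
  have hprodle : ∏ j ∈ Finset.Icc 1 k, ((j:ℝ) / (c + k)) ≤
      ∏ j ∈ Finset.Icc 1 k, ((j:ℝ) / (c + j)) := by
    apply Finset.prod_le_prod
    · intro j hj
      have hj1 := (Finset.mem_Icc.mp hj).1
      have hjp : (0:ℝ) ≤ j := by positivity
      positivity
    · intro j hj
      obtain ⟨hj1, hjk⟩ := Finset.mem_Icc.mp hj
      have hjp : (0:ℝ) < j := by exact_mod_cast hj1
      have hjk' : (j:ℝ) ≤ k := by exact_mod_cast hjk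
      have hcj : (0:ℝ) < c + j := by linarith
      gcongr
  have hprodeq : ∏ j ∈ Finset.Icc 1 k, ((j:ℝ) / (c + k)) =
      (∏ j ∈ Finset.Icc 1 k, (j:ℝ)) / (c + k) ^ k := by
    rw [Finset.prod_div_distrib, Finset.prod_const, Nat.card_Icc]
    simp
  have key : ((k:ℝ) * α / (c + k)) ^ k ≤
      α * ∏ j ∈ Finset.Icc 1 k, ((j:ℝ) / (c + j)) := by
    have h1 : ((k:ℝ) * α / (c + k)) ^ k = ((k:ℝ) * α) ^ k / (c + k) ^ k :=
      div_pow _ _ _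
    have h2 : ((k:ℝ) * α) ^ k ≤ (k:ℝ) * α :=
      pow_le_of_le_one (by positivity) hkα1 (by omega)
    have h3 : ((k:ℝ) * α / (c + k)) ^ k ≤ (k:ℝ) * α / (c + k) ^ k := by
      rw [h1]
      apply div_le_div_of_nonneg_right h2 (by positivity)
    have h4 : (k:ℝ) * α / (c + k) ^ k ≤
        α * ((∏ j ∈ Finset.Icc 1 k, (j:ℝ)) / (c + k) ^ k) := by
      rw [show (k:ℝ) * α / (c + k) ^ k = α * ((k:ℝ) / (c + k) ^ k) by ring]
      exact mul_le_mul_of_nonneg_left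
        (div_le_div_of_nonneg_right hkle (by positivity)) hα0.le
    calc ((k:ℝ) * α / (c + k)) ^ k ≤ (k:ℝ) * α / (c + k) ^ k := h3
      _ ≤ α * ((∏ j ∈ Finset.Icc 1 k, (j:ℝ)) / (c + k) ^ k) := h4
      _ = α * ∏ j ∈ Finset.Icc 1 k, ((j:ℝ) / (c + k)) := by rw [hprodeq]
      _ ≤ α * ∏ j ∈ Finset.Icc 1 k, ((j:ℝ) / (c + j)) := by
          exact mul_le_mul_of_nonneg_left hprodle hα0.le
  have hrpow := Real.rpow_le_rpow (by positivity) key (by positivity : (0:ℝ) ≤ 1 / k)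
  have hleft : ((((k:ℝ) * α / (c + k)) ^ k : ℝ)) ^ ((1:ℝ)/k) = (k:ℝ) * α / (c + k) := by
    rw [← Real.rpow_natCast ((k:ℝ) * α / (c + k)) k, ← Real.rpow_mul hβ]
    rw [mul_one_div, div_self (ne_of_gt hk0), Real.rpow_one]
  rw [hleft] at hrpow
  exact hrpow
end

section
/- For i.i.d. random variables P_1,...,P_n uniform on (0,1) and constants α_k ≤ ... ≤ α_n in (0,1) with α_i^k = (i(i-1)···(i-k+1))/(n(n-1)···(n-k+1)) · α, the probability that P_{i:n} ≤ α_i for at least one i in {k,...,n} equals exactly α. -/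
open Finset MeasureTheory ProbabilityTheory
open scoped ENNReal Pointwise
namespace Stmt7Aux


/-- Number of coordinates of `x` that are `≤ c`. -/
noncomputable def cnt {m : ℕ} (c : ℝ) (x : Fin m → ℝ) : ℕ := (Finset.univ.filter fun j => x j ≤ c).card

lemma cnt_le {m : ℕ} (c : ℝ) (x : Fin m → ℝ) : cnt c x ≤ m := by
  simpa [cnt] using (Finset.card_filter_le Finset.univ fun j => x j ≤ c)

lemma cnt_eq_sum {m : ℕ} (c : ℝ) (x : Fin m → ℝ) :
    cnt c x = ∑ j, if x j ≤ c then 1 else 0 := Finset.card_filter _ _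

lemma cnt_eq_iff_forall {m : ℕ} (c : ℝ) (x : Fin m → ℝ) :
    m ≤ cnt c x ↔ ∀ j, x j ≤ c := by
  constructor
  · intro h j
    have hcard : (Finset.univ.filter fun j => x j ≤ c) = Finset.univ := by
      apply Finset.eq_univ_of_card
      have h2 := cnt_le c x
      have : (Finset.univ.filter fun j => x j ≤ c).card = m := le_antisymm h2 h
      simpa using this
    have hj : j ∈ Finset.univ.filter fun j => x j ≤ c := by
      rw [hcard]; exact Finset.mem_univ j
    exact (Finset.mem_filter.mp hj).2
  · intro h
    have : (Finset.univ.filter fun j => x j ≤ c) = Finset.univ :=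
      Finset.filter_true_of_mem fun j _ => h j
    simp [cnt, this]

lemma measurable_cnt {m : ℕ} (c : ℝ) : Measurable (fun x : Fin m → ℝ => cnt c x) := by
  simp only [cnt_eq_sum]
  exact Finset.measurable_sum _ fun j _ =>
    Measurable.ite (measurableSet_le (measurable_pi_apply j) measurable_const)
      measurable_const measurable_const

lemma cnt_comp_perm {m : ℕ} (c : ℝ) (x : Fin m → ℝ) (σ : Equiv.Perm (Fin m)) :
    cnt c (x ∘ σ) = cnt c x := by
  simp only [cnt_eq_sum]
  exact Equiv.sum_comp σ fun j => if x j ≤ c then 1 else 0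

lemma cnt_insertNth {m : ℕ} (i : Fin (m + 1)) (u c : ℝ) (y : Fin m → ℝ) :
    cnt c (i.insertNth u y) = (if u ≤ c then 1 else 0) + cnt c y := by
  simp only [cnt_eq_sum]
  have h := Fin.sum_univ_succAbove (M := ℕ)
    (fun j : Fin (m+1) => if Fin.insertNth (α := fun _ => ℝ) i u y j ≤ c then 1 else 0) i
  rw [h, Fin.insertNth_apply_same]
  congr 1
  refine Finset.sum_congr rfl fun j _ => by rw [Fin.insertNth_apply_succAbove]

lemma cnt_inv_smul {m : ℕ} {u : ℝ} (hu : 0 < u) (c : ℝ) (y : Fin m → ℝ) :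
    cnt (c / u) (u⁻¹ • y) = cnt c y := by
  simp only [cnt]
  congr 1
  apply Finset.filter_congr
  intro j _
  simp only [Pi.smul_apply, smul_eq_mul]
  rw [div_eq_inv_mul]
  simp [mul_le_mul_iff_right₀ (inv_pos.mpr hu)]





def cube (m : ℕ) : Set (Fin m → ℝ) := Set.univ.pi fun _ => Set.Ioo (0:ℝ) 1

def Sev (k m : ℕ) (b : ℕ → ℝ) : Set (Fin m → ℝ) :=
  ⋃ i ∈ Finset.Icc k m, {x | i ≤ cnt (b i) x}

lemma measurableSet_cube (m : ℕ) : MeasurableSet (cube m) :=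
  MeasurableSet.univ_pi fun _ => measurableSet_Ioo

lemma measurableSet_Sev (k m : ℕ) (b : ℕ → ℝ) : MeasurableSet (Sev k m b) := by
  refine MeasurableSet.biUnion (Finset.Icc k m).countable_toSet fun i _ => ?_
  exact (measurable_cnt (b i)) measurableSet_Ici

lemma ties_null {m : ℕ} (i j : Fin (m + 1)) (hij : j ≠ i) :
    volume {x : Fin (m + 1) → ℝ | x i = x j} = 0 := by
  obtain ⟨j₀, hj₀⟩ := Fin.exists_succAbove_eq hij
  set e := MeasurableEquiv.piFinSuccAbove (fun _ : Fin (m+1) => ℝ) i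
  have mp := measurePreserving_piFinSuccAbove (fun _ : Fin (m+1) => (volume : Measure ℝ)) i
  have hT : MeasurableSet {x : Fin (m + 1) → ℝ | x i = x j} :=
    measurableSet_eq_fun (measurable_pi_apply i) (measurable_pi_apply j)
  have key : volume {x : Fin (m + 1) → ℝ | x i = x j}
      = ((volume : Measure ℝ).prod (Measure.pi fun _ : Fin m => (volume : Measure ℝ)))
        (⇑e.symm ⁻¹' {x : Fin (m + 1) → ℝ | x i = x j}) := by
    rw [volume_pi]
    exact ((MeasurePreserving.symm e mp).measure_preimage hT.nullMeasurableSet).symm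
  rw [key]
  have hpre : ⇑e.symm ⁻¹' {x : Fin (m + 1) → ℝ | x i = x j}
      = {p : ℝ × (Fin m → ℝ) | p.1 = p.2 j₀} := by
    ext ⟨u, y⟩
    simp only [Set.mem_preimage, Set.mem_setOf_eq]
    have : e.symm (u, y) = Fin.insertNth i u y := rfl
    rw [this, ← hj₀, Fin.insertNth_apply_same, Fin.insertNth_apply_succAbove]
  rw [hpre]
  have hps : MeasurableSet {p : ℝ × (Fin m → ℝ) | p.1 = p.2 j₀} :=
    measurableSet_eq_fun measurable_fst ((measurable_pi_apply j₀).comp measurable_snd)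
  rw [Measure.prod_apply hps]
  have hz : ∀ u : ℝ, (Measure.pi fun _ : Fin m => (volume : Measure ℝ))
      {y : Fin m → ℝ | u = y j₀} = 0 := by
    intro u
    have hset : {y : Fin m → ℝ | u = y j₀}
        = Set.univ.pi fun l => if l = j₀ then {u} else Set.univ := by
      ext y
      simp only [Set.mem_setOf_eq, Set.mem_pi, Set.mem_univ, true_implies]
      constructor
      · intro h l
        by_cases hl : l = j₀ <;> simp [hl, ← h]
      · intro h
        have := h j₀
        simp at this
        exact this.symm
    rw [hset, Measure.pi_pi]
    apply Finset.prod_eq_zero (Finset.mem_univ j₀)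
    simp
  simp [hz]

lemma volume_preimage_perm {m : ℕ} (σ : Equiv.Perm (Fin m)) {A : Set (Fin m → ℝ)}
    (hA : MeasurableSet A) : volume {x : Fin m → ℝ | x ∘ σ ∈ A} = volume A := by
  have mp := measurePreserving_piCongrLeft (fun _ : Fin m => (volume : Measure ℝ)) σ⁻¹
  have hpre : {x : Fin m → ℝ | x ∘ σ ∈ A}
      = ⇑(MeasurableEquiv.piCongrLeft (fun _ : Fin m => ℝ) σ⁻¹) ⁻¹' A := by
    ext x
    simp only [Set.mem_preimage, Set.mem_setOf_eq]
    have : (MeasurableEquiv.piCongrLeft (fun _ : Fin m => ℝ) σ⁻¹) x = x ∘ σ := by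
      funext b
      have h1 := MeasurableEquiv.piCongrLeft_apply_apply (β := fun _ : Fin m => ℝ)
        (σ⁻¹ : Fin m ≃ Fin m) x (σ b)
      simpa using h1
    rw [this]
  rw [hpre]
  have h2 : Measure.pi (fun _ : Fin m => (volume : Measure ℝ)) = volume := volume_pi.symm
  have := mp.measure_preimage hA.nullMeasurableSet
  rwa [h2] at this


lemma mem_Sev {k m : ℕ} {b : ℕ → ℝ} {x : Fin m → ℝ} :
    x ∈ Sev k m b ↔ ∃ i ∈ Finset.Icc k m, i ≤ cnt (b i) x := by
  simp [Sev]

lemma lt_one_of_pow {c : ℝ} {k : ℕ} (hc : 0 < c) (hk : k ≠ 0) (h : c ^ k < 1) : c < 1 :=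
  (pow_lt_one_iff_of_nonneg hc.le hk).mp h

set_option maxHeartbeats 2000000 in
lemma key (k : ℕ) (hk : 1 ≤ k) :
    ∀ m, k ≤ m → ∀ α : ℝ, 0 < α → α < 1 → ∀ b : ℕ → ℝ,
      (∀ i ∈ Finset.Icc k m, 0 < b i) →
      (∀ i ∈ Finset.Icc k m, b i ^ k = (i.choose k : ℝ) / (m.choose k : ℝ) * α) →
      volume (cube m ∩ Sev k m b) = ENNReal.ofReal α := by
  refine Nat.le_induction ?_ ?_
  · -- base case m = k
    intro α hα0 hα1 b hbpos hbdef
    have hkk : k ∈ Finset.Icc k k := by simp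
    have hbk : b k ^ k = α := by
      have := hbdef k hkk
      rwa [Nat.choose_self, div_self (by norm_num), one_mul] at this
    have hbk0 : 0 < b k := hbpos k hkk
    have hbk1 : b k < 1 := lt_one_of_pow hbk0 (by omega) (hbk ▸ hα1)
    have hset : cube k ∩ Sev k k b = Set.univ.pi fun _ : Fin k => Set.Ioc (0:ℝ) (b k) := by
      ext x
      simp only [Set.mem_inter_iff, cube, Set.mem_univ_pi, mem_Sev, Finset.mem_Icc]
      constructor
      · rintro ⟨hcube, i, ⟨hik, hki⟩, hcnt⟩
        have hik' : i = k := le_antisymm hki hik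
        subst hik'
        have hall := (cnt_eq_iff_forall (b i) x).mp hcnt
        exact fun j => ⟨(hcube j).1, hall j⟩
      · intro h
        refine ⟨fun j => ⟨(h j).1, lt_of_le_of_lt (h j).2 hbk1⟩, k, ⟨le_refl k, le_refl k⟩, ?_⟩
        exact (cnt_eq_iff_forall (b k) x).mpr fun j => (h j).2
    rw [hset, volume_pi_pi]
    simp only [Real.volume_Ioc, sub_zero]
    rw [Finset.prod_const, Finset.card_univ, Fintype.card_fin,
      ← ENNReal.ofReal_pow hbk0.le, hbk]
  · -- inductive step
    intro m hkm IH α hα0 hα1 b hbpos hbdef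
    have hkm1 : k ≤ m + 1 := Nat.le_succ_of_le hkm
    have hm1mem : m + 1 ∈ Finset.Icc k (m+1) := by simp [hkm1]
    have hchoose_pos : (0:ℝ) < ((m+1).choose k : ℝ) := by exact_mod_cast Nat.choose_pos hkm1
    have hchoosem_pos : (0:ℝ) < (m.choose k : ℝ) := by exact_mod_cast Nat.choose_pos hkm
    have hbn : b (m+1) ^ k = α := by
      have h := hbdef (m+1) hm1mem
      rwa [div_self hchoose_pos.ne', one_mul] at h
    have hbn0 : 0 < b (m+1) := hbpos (m+1) hm1mem
    have hbn1 : b (m+1) < 1 := lt_one_of_pow hbn0 (by omega) (hbn ▸ hα1)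
    have hble : ∀ i ∈ Finset.Icc k (m+1), b i ≤ b (m+1) := by
      intro i hi
      have hch : (i.choose k : ℝ) ≤ ((m+1).choose k : ℝ) := by
        exact_mod_cast Nat.choose_le_choose k (Finset.mem_Icc.mp hi).2
      have h1 : b i ^ k ≤ b (m+1) ^ k := by
        rw [hbdef i hi, hbn]
        calc (i.choose k : ℝ) / ((m+1).choose k : ℝ) * α ≤ 1 * α := by
              apply mul_le_mul_of_nonneg_right _ hα0.le
              rw [div_le_one hchoose_pos]; exact hch
          _ = α := one_mul α
      exact (pow_le_pow_iff_left₀ (hbpos i hi).le hbn0.le (by omega)).mp h1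
    set A := cube (m+1) ∩ Sev k (m+1) b with hAdef
    have hAmeas : MeasurableSet A := (measurableSet_cube _).inter (measurableSet_Sev _ _ _)
    set M : Fin (m+1) → Set (Fin (m+1) → ℝ) := fun j => {x | ∀ l, l ≠ j → x l < x j} with hMdef
    have hMmeas : ∀ j, MeasurableSet (M j) := by
      intro j
      have hrw : M j = ⋂ l ∈ ({j}ᶜ : Set (Fin (m+1))), {x : Fin (m+1) → ℝ | x l < x j} := by
        ext x; simp [hMdef]
      rw [hrw]
      exact MeasurableSet.biInter (Set.to_countable _) fun l _ =>
        measurableSet_lt (measurable_pi_apply l) (measurable_pi_apply j)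
    -- ties are null
    have hdiff0 : volume (A \ ⋃ j, M j) = 0 := by
      apply measure_mono_null (t := ⋃ (i : Fin (m+1)) (j : Fin (m+1)) (_ : j ≠ i),
        {x : Fin (m+1) → ℝ | x i = x j})
      · rintro x ⟨hxA, hxM⟩
        obtain ⟨j₀, -, hj₀⟩ := Finset.exists_max_image Finset.univ x ⟨0, Finset.mem_univ 0⟩
        have hnot : x ∉ M j₀ := fun hc => hxM (Set.mem_iUnion.mpr ⟨j₀, hc⟩)
        rw [hMdef] at hnot
        simp only [Set.mem_setOf_eq, not_forall, Classical.not_imp, not_lt] at hnot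
        obtain ⟨l, hl, hge⟩ := hnot
        have hle : x l ≤ x j₀ := hj₀ l (Finset.mem_univ l)
        have heq : x j₀ = x l := le_antisymm hge hle
        exact Set.mem_iUnion.mpr ⟨j₀, Set.mem_iUnion.mpr ⟨l, Set.mem_iUnion.mpr ⟨hl, heq⟩⟩⟩
      · refine measure_iUnion_null fun i => measure_iUnion_null fun j => measure_iUnion_null fun h => ?_
        exact ties_null i j h
    have hMdisj : Pairwise (Function.onFun Disjoint fun j => A ∩ M j) := by
      intro j j' hjj'
      refine Set.disjoint_left.mpr ?_
      rintro x ⟨-, hx⟩ ⟨-, hx'⟩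
      have h1 := hx j' (Ne.symm hjj')
      have h2 := hx' j hjj'
      linarith
    have hsum : volume A = ∑ j : Fin (m+1), volume (A ∩ M j) := by
      have h1 : volume (A ∩ ⋃ j, M j) + volume (A \ ⋃ j, M j) = volume A :=
        measure_inter_add_diff A (MeasurableSet.iUnion hMmeas)
      rw [hdiff0, add_zero] at h1
      rw [← h1, Set.inter_iUnion, measure_iUnion hMdisj fun j => hAmeas.inter (hMmeas j)]
      exact tsum_fintype _
    have hperm : ∀ j, volume (A ∩ M j) = volume (A ∩ M (Fin.last m)) := by
      intro j
      set σ := Equiv.swap j (Fin.last m) with hσdef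
      have hσlast : σ (Fin.last m) = j := Equiv.swap_apply_right _ _
      have hσσ : ∀ l, σ (σ l) = l := fun l => Equiv.swap_apply_self _ _ _
      have hiff : {x : Fin (m+1) → ℝ | x ∘ σ ∈ A ∩ M (Fin.last m)} = A ∩ M j := by
        ext x
        simp only [Set.mem_setOf_eq, Set.mem_inter_iff, hAdef]
        have hcube : (x ∘ σ ∈ cube (m+1)) ↔ x ∈ cube (m+1) := by
          simp only [cube, Set.mem_univ_pi, Function.comp_apply]
          constructor
          · intro h l
            have := h (σ l)
            rwa [hσσ] at this
          · intro h l
            exact h (σ l)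
        have hsev : (x ∘ σ ∈ Sev k (m+1) b) ↔ x ∈ Sev k (m+1) b := by
          simp only [mem_Sev, cnt_comp_perm]
        have hMx : (x ∘ σ ∈ M (Fin.last m)) ↔ x ∈ M j := by
          simp only [hMdef, Set.mem_setOf_eq, Function.comp_apply, hσlast]
          constructor
          · intro h l' hl'
            have h1 : σ l' ≠ Fin.last m := by
              intro hcon
              apply hl'
              have := congrArg σ hcon
              rwa [hσσ, hσlast] at this
            have := h (σ l') h1
            rwa [hσσ] at this
          · intro h l hl
            have h1 : σ l ≠ j := by
              intro hcon
              apply hl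
              have h2 := congrArg σ hcon
              rw [hσσ] at h2
              rw [h2, hσdef]
              exact Equiv.swap_apply_left _ _
            exact h (σ l) h1
        tauto
      rw [← hiff, volume_preimage_perm σ (hAmeas.inter (hMmeas (Fin.last m)))]
    have hcard : volume A = ((m+1 : ℕ) : ℝ≥0∞) * volume (A ∩ M (Fin.last m)) := by
      rw [hsum, Finset.sum_congr rfl (fun j _ => hperm j), Finset.sum_const, Finset.card_univ,
        Fintype.card_fin, nsmul_eq_mul]
    -- Step II: compute volume (A ∩ M (Fin.last m)) via Fubini and scaling
    have hkne : k ≠ 0 := by omega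
    set C : ℝ := (m.choose k : ℝ) / ((m+1).choose k : ℝ) * α with hCdef
    have hC0 : 0 < C := by positivity
    have hBvol : volume (A ∩ M (Fin.last m)) = ENNReal.ofReal (α / (m+1)) := by
      set e := MeasurableEquiv.piFinSuccAbove (fun _ : Fin (m+1) => ℝ) (Fin.last m) with hedef
      have mp := measurePreserving_piFinSuccAbove (fun _ : Fin (m+1) => (volume : Measure ℝ))
        (Fin.last m)
      set B := A ∩ M (Fin.last m) with hBdef
      have hBmeas : MeasurableSet B := hAmeas.inter (hMmeas _)
      have h1 : volume B = ((volume : Measure ℝ).prod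
          (Measure.pi fun _ : Fin m => (volume : Measure ℝ))) (⇑e.symm ⁻¹' B) := by
        rw [volume_pi]
        exact ((MeasurePreserving.symm e mp).measure_preimage hBmeas.nullMeasurableSet).symm
      rw [h1, Measure.prod_apply (e.symm.measurable hBmeas)]
      -- membership characterization of slices
      have hmemB : ∀ (u : ℝ) (y : Fin m → ℝ),
          ((u, y) ∈ ⇑e.symm ⁻¹' B) ↔
          ((0 < u ∧ u < 1) ∧ (∀ j, 0 < y j ∧ y j < 1) ∧ (∀ j, y j < u) ∧
            ∃ i ∈ Finset.Icc k (m+1), i ≤ (if u ≤ b i then 1 else 0) + cnt (b i) y) := by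
        intro u y
        have hx : e.symm (u, y) = Fin.insertNth (α := fun _ => ℝ) (Fin.last m) u y := rfl
        rw [Set.mem_preimage, hx]
        set x := Fin.insertNth (α := fun _ => ℝ) (Fin.last m) u y with hxdef
        have hxlast : x (Fin.last m) = u := Fin.insertNth_apply_same _ _ _
        have hxsab : ∀ j, x ((Fin.last m).succAbove j) = y j := fun j =>
          Fin.insertNth_apply_succAbove _ _ _ _
        have hcube : x ∈ cube (m+1) ↔ (0 < u ∧ u < 1) ∧ ∀ j, 0 < y j ∧ y j < 1 := by
          simp only [cube, Set.mem_univ_pi, Set.mem_Ioo]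
          rw [Fin.forall_iff_succAbove (Fin.last m)]
          simp only [hxlast, hxsab]
        have hMx : x ∈ M (Fin.last m) ↔ ∀ j, y j < u := by
          simp only [hMdef, Set.mem_setOf_eq]
          rw [Fin.forall_iff_succAbove (Fin.last m)]
          simp only [hxlast, hxsab, ne_eq, not_true_eq_false, false_implies, true_and]
          constructor
          · intro h j
            exact h j (Fin.succAbove_ne _ j) 
          · intro h j _
            exact h j
        have hSx : x ∈ Sev k (m+1) b ↔
            ∃ i ∈ Finset.Icc k (m+1), i ≤ (if u ≤ b i then 1 else 0) + cnt (b i) y := by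
          rw [mem_Sev]
          refine exists_congr fun i => and_congr_right fun _ => ?_
          rw [hxdef, cnt_insertNth]
        rw [hBdef, hAdef, Set.mem_inter_iff, Set.mem_inter_iff, hcube, hSx, hMx]
        tauto
      have hslice : ∀ u : ℝ, (Measure.pi fun _ : Fin m => (volume : Measure ℝ))
          (Prod.mk u ⁻¹' (⇑e.symm ⁻¹' B))
          = (Set.Ioc (0:ℝ) (b (m+1))).indicator (fun u => ENNReal.ofReal (u ^ m)) u
            + (Set.Ioo (b (m+1)) 1).indicator
                (fun u => ENNReal.ofReal (C * u ^ (m - k))) u := by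
        intro u
        by_cases h1u : 0 < u ∧ u ≤ b (m+1)
        · -- low regime: slice is the full small cube
          have hu1 : u < 1 := lt_of_le_of_lt h1u.2 hbn1
          have hset : Prod.mk u ⁻¹' (⇑e.symm ⁻¹' B)
              = Set.univ.pi fun _ : Fin m => Set.Ioo (0:ℝ) u := by
            ext y
            rw [Set.mem_preimage, hmemB u y]
            simp only [Set.mem_univ_pi, Set.mem_Ioo]
            constructor
            · rintro ⟨-, hy1, hy2, -⟩
              exact fun j => ⟨(hy1 j).1, hy2 j⟩
            · intro hy
              refine ⟨⟨h1u.1, hu1⟩, fun j => ⟨(hy j).1, lt_trans (hy j).2 hu1⟩,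
                fun j => (hy j).2, m+1, hm1mem, ?_⟩
              rw [if_pos h1u.2]
              have hcnt : m ≤ cnt (b (m+1)) y := (cnt_eq_iff_forall _ _).mpr
                fun j => le_trans (hy j).2.le h1u.2
              omega
          rw [hset, Measure.pi_pi]
          simp only [Real.volume_Ioo, sub_zero]
          rw [Finset.prod_const, Finset.card_univ, Fintype.card_fin,
            ← ENNReal.ofReal_pow h1u.1.le]
          rw [Set.indicator_of_mem (Set.mem_Ioc.mpr h1u),
            Set.indicator_of_notMem (by simp only [Set.mem_Ioo, not_and]; intro hc; linarith [h1u.2]),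
            add_zero]
        · by_cases h2u : b (m+1) < u ∧ u < 1
          · -- scaling regime
            obtain ⟨hu1, hu2⟩ := h2u
            have hu0 : 0 < u := lt_trans hbn0 hu1
            have hset : Prod.mk u ⁻¹' (⇑e.symm ⁻¹' B)
                = u • (cube m ∩ Sev k m (fun i => b i / u) : Set (Fin m → ℝ)) := by
              ext y
              rw [Set.mem_preimage, hmemB u y,
                Set.mem_smul_set_iff_inv_smul_mem₀ hu0.ne', Set.mem_inter_iff, mem_Sev]
              simp only [cube, Set.mem_univ_pi, Set.mem_Ioo, Pi.smul_apply, smul_eq_mul]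
              constructor
              · rintro ⟨-, hy1, hy2, i, hi, hcnt⟩
                have hite : ¬ (u ≤ b i) := not_le.mpr (lt_of_le_of_lt (hble i hi) hu1)
                rw [if_neg hite, zero_add] at hcnt
                have him : i ≤ m := le_trans hcnt (cnt_le _ _)
                have hi' : i ∈ Finset.Icc k m :=
                  Finset.mem_Icc.mpr ⟨(Finset.mem_Icc.mp hi).1, him⟩
                refine ⟨fun j => ⟨mul_pos (inv_pos.mpr hu0) (hy1 j).1, ?_⟩, i, hi', ?_⟩
                · rw [inv_mul_lt_iff₀ hu0, mul_one]
                  exact hy2 j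
                · rw [cnt_inv_smul hu0]
                  exact hcnt
              · rintro ⟨hcube', i, hi, hcnt⟩
                rw [cnt_inv_smul hu0] at hcnt
                have hyj : ∀ j, 0 < y j ∧ y j < u := by
                  intro j
                  obtain ⟨ha, hb'⟩ := hcube' j
                  constructor
                  · by_contra hc
                    push_neg at hc
                    nlinarith [inv_pos.mpr hu0]
                  · rw [inv_mul_lt_iff₀ hu0, mul_one] at hb'
                    exact hb'
                refine ⟨⟨hu0, hu2⟩, fun j => ⟨(hyj j).1, lt_trans (hyj j).2 hu2⟩,
                  fun j => (hyj j).2, i, ?_, le_trans hcnt (Nat.le_add_left _ _)⟩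
                have := Finset.mem_Icc.mp hi
                exact Finset.mem_Icc.mpr ⟨this.1, by omega⟩
            rw [hset]
            -- apply scaling and the inductive hypothesis
            have hukpos : (0:ℝ) < u ^ k := pow_pos hu0 k
            have haux : α < u ^ k := by
              rw [← hbn]
              exact pow_lt_pow_left₀ hu1 hbn0.le hkne
            have hα'0 : 0 < C / u ^ k := by positivity
            have hα'1 : C / u ^ k < 1 := by
              rw [div_lt_one hukpos]
              calc C ≤ 1 * α := by
                    rw [hCdef]
                    apply mul_le_mul_of_nonneg_right _ hα0.le
                    rw [div_le_one hchoose_pos]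
                    exact_mod_cast Nat.choose_le_choose k (Nat.le_succ m)
                _ = α := one_mul α
                _ < u ^ k := haux
            have hIH := IH (C / u ^ k) hα'0 hα'1 (fun i => b i / u)
              (fun i hi => div_pos (hbpos i (Finset.mem_Icc.mpr
                ⟨(Finset.mem_Icc.mp hi).1, Nat.le_succ_of_le (Finset.mem_Icc.mp hi).2⟩)) hu0)
              (fun i hi => by
                have hi1 : i ∈ Finset.Icc k (m+1) := Finset.mem_Icc.mpr
                  ⟨(Finset.mem_Icc.mp hi).1, by have := (Finset.mem_Icc.mp hi).2; omega⟩
                rw [div_pow, hbdef i hi1, hCdef]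
                field_simp)
            rw [← volume_pi, Measure.addHaar_smul, hIH, Module.finrank_pi, Fintype.card_fin]
            rw [abs_of_pos (pow_pos hu0 m), ← ENNReal.ofReal_mul (pow_pos hu0 m).le]
            rw [Set.indicator_of_notMem (by simp only [Set.mem_Ioc, not_and]; intro hc; push_neg; linarith),
              Set.indicator_of_mem (Set.mem_Ioo.mpr ⟨hu1, hu2⟩), zero_add]
            congr 1
            have hpow : u ^ (m - k) * u ^ k = u ^ m := pow_sub_mul_pow u hkm
            field_simp
            nlinarith [hpow]
          · -- empty regime
            have hset : Prod.mk u ⁻¹' (⇑e.symm ⁻¹' B) = ∅ := by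
              ext y
              rw [Set.mem_preimage, hmemB u y]
              simp only [Set.mem_empty_iff_false, iff_false]
              rintro ⟨⟨hu0, hu1⟩, -, -, -⟩
              rcases le_or_gt u (b (m+1)) with h | h
              · exact h1u ⟨hu0, h⟩
              · exact h2u ⟨h, hu1⟩
            rw [hset]
            rw [Set.indicator_of_notMem (fun hc => h1u ⟨hc.1, hc.2⟩),
              Set.indicator_of_notMem (fun hc => h2u ⟨hc.1, hc.2⟩)]
            simp
      rw [lintegral_congr hslice]
      have hfmeas : Measurable fun u : ℝ =>
          (Set.Ioc (0:ℝ) (b (m+1))).indicator (fun u => ENNReal.ofReal (u ^ m)) u := by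
        apply Measurable.indicator _ measurableSet_Ioc
        exact (measurable_id.pow_const m).ennreal_ofReal
      rw [lintegral_add_left hfmeas]
      rw [lintegral_indicator measurableSet_Ioc, lintegral_indicator measurableSet_Ioo]
      have I1 : ∫⁻ u in Set.Ioc (0:ℝ) (b (m+1)), ENNReal.ofReal (u ^ m)
          = ENNReal.ofReal (b (m+1) ^ (m+1) / (m+1)) := by
        rw [← ofReal_integral_eq_lintegral_ofReal (intervalIntegral.intervalIntegrable_pow m).1
          (ae_restrict_of_forall_mem measurableSet_Ioc fun x hx => pow_nonneg hx.1.le m)]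
        congr 1
        rw [← intervalIntegral.integral_of_le hbn0.le, integral_pow]
        norm_num
      have I2 : ∫⁻ u in Set.Ioo (b (m+1)) 1, ENNReal.ofReal (C * u ^ (m - k))
          = ENNReal.ofReal (C * ((1 - b (m+1) ^ (m - k + 1)) / (((m - k : ℕ) : ℝ) + 1))) := by
        rw [← ofReal_integral_eq_lintegral_ofReal
          ((((intervalIntegral.intervalIntegrable_pow (m-k)).const_mul C)).1.mono_set Set.Ioo_subset_Ioc_self)
          (ae_restrict_of_forall_mem measurableSet_Ioo fun x hx =>
            mul_nonneg hC0.le (pow_nonneg (le_of_lt (lt_trans hbn0 hx.1)) _))]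
        congr 1
        rw [← MeasureTheory.integral_Ioc_eq_integral_Ioo,
          ← intervalIntegral.integral_of_le hbn1.le]
        rw [intervalIntegral.integral_const_mul, integral_pow]
        norm_num
      rw [I1, I2]
      have ht1 : b (m+1) ^ (m - k + 1) ≤ 1 :=
        pow_le_one₀ hbn0.le hbn1.le
      rw [← ENNReal.ofReal_add (div_nonneg (pow_nonneg hbn0.le _) (by positivity))
        (mul_nonneg hC0.le (div_nonneg (by linarith) (by positivity)))]
      congr 1
      -- the real arithmetic identity
      have hid : ((m+1).choose k : ℝ) * ((m:ℝ) + 1 - k) = ((m:ℝ) + 1) * (m.choose k : ℝ) := by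
        have h := Nat.choose_mul_succ_eq m k
        have hcast : ((m + 1 - k : ℕ) : ℝ) = (m:ℝ) + 1 - k := by
          rw [Nat.cast_sub hkm1]; push_cast; ring
        have h2 : ((m.choose k * (m + 1) : ℕ) : ℝ) = (((m+1).choose k * (m + 1 - k) : ℕ) : ℝ) := by
          exact_mod_cast congrArg (fun z : ℕ => (z : ℝ)) h
        push_cast at h2
        rw [hcast] at h2
        linarith
      have hsplit : b (m+1) ^ (m+1) = α * b (m+1) ^ (m - k + 1) := by
        rw [← hbn, ← pow_add]
        congr 1
        omega
      have hcast2 : ((m - k : ℕ) : ℝ) = (m:ℝ) - k := by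
        rw [Nat.cast_sub hkm]
      rw [hsplit, hCdef, hcast2]
      have hm1 : (0:ℝ) < (m:ℝ) + 1 := by positivity
      have hmk1 : (0:ℝ) < (m:ℝ) - k + 1 := by
        have : (k:ℝ) ≤ m := by exact_mod_cast hkm
        linarith
      have hratio : (m.choose k : ℝ) / ((m+1).choose k : ℝ) = ((m:ℝ) - k + 1) / ((m:ℝ) + 1) := by
        rw [div_eq_div_iff hchoose_pos.ne' hm1.ne']; linarith [hid]
      rw [hratio]
      field_simp
      ring
    -- conclusion
    rw [hcard, hBvol]
    rw [show (((m+1 : ℕ)) : ℝ≥0∞) = ENNReal.ofReal ((m+1 : ℕ) : ℝ) from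
      (ENNReal.ofReal_natCast _).symm, ← ENNReal.ofReal_mul (by positivity)]
    congr 1
    push_cast
    field_simp


end Stmt7Aux

open Stmt7Aux in
/-- Exact k-FWER of the generalized Simes test under independence: for i.i.d. uniform(0,1)
p-values and critical values `α_i` with `α_i^k = (C(i,k)/C(n,k))·α`, the probability that
`P_{i:n} ≤ α_i` for at least one `i ∈ {k,…,n}` equals exactly `α`. -/
theorem stmt7 {Ω : Type*} [MeasurableSpace Ω] (μ : Measure Ω) [IsProbabilityMeasure μ]
    (n k : ℕ) (hk : 1 ≤ k) (hkn : k ≤ n)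
    (P : Fin n → Ω → ℝ) (hmeas : ∀ i, Measurable (P i))
    (hindep : iIndepFun P μ)
    (hunif : ∀ i, Measure.map (P i) μ = volume.restrict (Set.Ioo (0 : ℝ) 1))
    (α : ℝ) (hα0 : 0 < α) (hα1 : α < 1)
    (a : ℕ → ℝ) (ha01 : ∀ i ∈ Finset.Icc k n, a i ∈ Set.Ioo (0 : ℝ) 1)
    (hmono : ∀ i ∈ Finset.Icc k n, ∀ j ∈ Finset.Icc k n, i ≤ j → a i ≤ a j)
    (hdef : ∀ i ∈ Finset.Icc k n,
      (a i) ^ k = ((i.choose k : ℝ) / (n.choose k : ℝ)) * α) :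
    μ (⋃ i ∈ Finset.Icc k n,
        {ω | i ≤ (Finset.univ.filter fun j => P j ω ≤ a i).card}) =
      ENNReal.ofReal α := by
  set X : Ω → (Fin n → ℝ) := fun ω j => P j ω with hXdef
  have hX : Measurable X := measurable_pi_lambda _ fun j => hmeas j
  -- the joint law is the product of uniforms
  have hmap : Measure.map X μ = Measure.pi fun _ : Fin n => volume.restrict (Set.Ioo (0:ℝ) 1) := by
    refine (Measure.pi_eq fun s hs => ?_).symm
    rw [Measure.map_apply hX (MeasurableSet.univ_pi hs)]
    have hpre : X ⁻¹' Set.univ.pi s = ⋂ j ∈ (Finset.univ : Finset (Fin n)), P j ⁻¹' s j := by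
      ext ω
      simp [hXdef, Set.mem_pi]
    rw [hpre, hindep.measure_inter_preimage_eq_mul Finset.univ (fun i _ => hs i)]
    refine Finset.prod_congr rfl fun i _ => ?_
    rw [← hunif i, Measure.map_apply (hmeas i) (hs i)]
  -- the product of restricted uniforms is the restriction of volume to the cube
  have hres : (Measure.pi fun _ : Fin n => volume.restrict (Set.Ioo (0:ℝ) 1))
      = volume.restrict (cube n) := by
    refine Measure.pi_eq fun s hs => ?_
    rw [Measure.restrict_apply (MeasurableSet.univ_pi hs)]
    have : Set.univ.pi s ∩ cube n = Set.univ.pi fun i => s i ∩ Set.Ioo 0 1 := by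
      rw [cube, ← Set.pi_inter_distrib]
    rw [this, volume_pi_pi]
    exact Finset.prod_congr rfl fun i _ => (Measure.restrict_apply (hs i)).symm
  -- the event is the preimage of `Sev`
  have hev : (⋃ i ∈ Finset.Icc k n,
      {ω | i ≤ (Finset.univ.filter fun j => P j ω ≤ a i).card}) = X ⁻¹' Sev k n a := by
    ext ω
    simp only [Set.mem_iUnion, Set.mem_preimage, Sev, Set.mem_setOf_eq, cnt, hXdef]
  rw [hev, ← Measure.map_apply hX (measurableSet_Sev k n a), hmap, hres,
    Measure.restrict_apply (measurableSet_Sev k n a), Set.inter_comm]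
  exact key k hk n hkn α hα0 hα1 a (fun i hi => (ha01 i hi).1) hdef
end

section
/- Single-step k-FWER control: if P_1,...,P_n have identical k-th order joint distributions under the null hypotheses with G_k the c.d.f. of the maximum of any k of them, and α_k is defined by G_k(α_k) = α / binom(n,k), then for any subset of n_0 ≥ k true null hypotheses, the probability that at least k true null p-values are at most α_k is at most α. -/
open Finset MeasureTheory

/-- Single-step k-FWER control: if the true-null p-values have identical `k`-th order joint
distributions with common max-c.d.f. `G_k`, and `G_k(α_k) = α/C(n,k)`, then the probability
that at least `k` true null p-values are at most `α_k` is at most `α`. -/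
theorem stmt9 {Ω : Type*} [MeasurableSpace Ω] (μ : Measure Ω) [IsProbabilityMeasure μ]
    (n k n₀ : ℕ) (hk : 1 ≤ k) (hkn₀ : k ≤ n₀) (hn₀n : n₀ ≤ n)
    (P : Fin n → Ω → ℝ) (hmeas : ∀ i, Measurable (P i))
    (T : Finset (Fin n)) (hT : T.card = n₀)
    (Gk : ℝ → ℝ)
    (hGk : ∀ J : Finset (Fin n), J ⊆ T → J.card = k → ∀ u : ℝ,
      μ {ω | ∀ j ∈ J, P j ω ≤ u} = ENNReal.ofReal (Gk u))
    (α αk : ℝ) (hα0 : 0 < α) (hα1 : α < 1)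
    (hαk : Gk αk = α / (n.choose k : ℝ)) :
    μ {ω | k ≤ (T.filter fun j => P j ω ≤ αk).card} ≤ ENNReal.ofReal α := by
  set S : Finset (Finset (Fin n)) := T.powersetCard k with hS
  have hsub : {ω | k ≤ (T.filter fun j => P j ω ≤ αk).card} ⊆
      ⋃ J ∈ S, {ω | ∀ j ∈ J, P j ω ≤ αk} := by
    intro ω hω
    simp only [Set.mem_setOf_eq] at hω
    obtain ⟨J, hJsub, hJcard⟩ := Finset.exists_subset_card_eq hω
    have hJS : J ∈ S := by
      simp only [hS, Finset.mem_powersetCard]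
      exact ⟨hJsub.trans (Finset.filter_subset _ _), hJcard⟩
    exact Set.mem_biUnion hJS fun j hj => (Finset.mem_filter.mp (hJsub hj)).2
  have h1 : μ {ω | k ≤ (T.filter fun j => P j ω ≤ αk).card} ≤
      ∑ J ∈ S, μ {ω | ∀ j ∈ J, P j ω ≤ αk} :=
    le_trans (measure_mono hsub) (measure_biUnion_finset_le S _)
  have h2 : ∀ J ∈ S, μ {ω | ∀ j ∈ J, P j ω ≤ αk} = ENNReal.ofReal (α / (n.choose k : ℝ)) := by
    intro J hJ
    rw [hS, Finset.mem_powersetCard] at hJ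
    rw [hGk J hJ.1 hJ.2 αk, hαk]
  rw [Finset.sum_congr rfl h2, Finset.sum_const] at h1
  have hScard : S.card = n₀.choose k := by
    rw [hS, Finset.card_powersetCard, hT]
  have hchoose_pos : (0 : ℝ) < (n.choose k : ℝ) := by
    exact_mod_cast Nat.choose_pos (hkn₀.trans hn₀n)
  have hle : (n₀.choose k : ℝ) ≤ (n.choose k : ℝ) := by
    exact_mod_cast Nat.choose_le_choose k hn₀n
  refine h1.trans ?_
  rw [hScard, nsmul_eq_mul]
  rw [show ((n₀.choose k : ℕ) : ENNReal) = ENNReal.ofReal (n₀.choose k : ℝ) by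
    simp [ENNReal.ofReal_natCast]]
  rw [← ENNReal.ofReal_mul (by positivity)]
  apply ENNReal.ofReal_le_ofReal
  rw [mul_div_assoc']
  rw [div_le_iff₀ hchoose_pos]
  calc (n₀.choose k : ℝ) * α ≤ (n.choose k : ℝ) * α := by
        exact mul_le_mul_of_nonneg_right hle hα0.le
    _ = α * (n.choose k : ℝ) := mul_comm _ _
end

section
/- Stepdown k-FWER control: with critical values α_k ≤ ... ≤ α_n satisfying G_k(α_i) = α / binom(n+k−i, k), if the generalized stepdown procedure rejects at least k true null hypotheses (out of n_0 ≥ k true nulls), then P_{k:n_0} ≤ α_{n−n_0+k}, and hence the k-FWER is at most binom(n_0,k) · G_k(α_{n−n_0+k}) = α. -/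
open Finset MeasureTheory
open scoped Classical

variable {Ω : Type*}

/-- The `j`-th order statistic (as a value) of `X₁(ω),…,Xₙ(ω)`. -/
noncomputable def ordStat {n : ℕ} (X : Fin n → Ω → ℝ) (j : ℕ) (ω : Ω) : ℝ :=
  (List.insertionSort (· ≤ ·) (List.ofFn fun i => X i ω)).getD (j - 1) 0

/-- The first step index at which the stepdown procedure with critical values
`α_{max(j,k)}` stops: `min {j ∈ {1,…,n} : P_{j:n} ≥ α_{max(j,k)}}` (and `n+1` if no such `j`). -/
noncomputable def stopIdx {n : ℕ} (k : ℕ) (P : Fin n → Ω → ℝ) (a : ℕ → ℝ) (ω : Ω) : ℕ :=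
  if h : ((Finset.Icc 1 n).filter fun j => a (max j k) ≤ ordStat P j ω).Nonempty then
    (((Finset.Icc 1 n).filter fun j => a (max j k) ≤ ordStat P j ω)).min' h
  else n + 1

/-- Hypothesis `H_m` is rejected by the generalized stepdown procedure at `ω`:
its p-value is among the `stopIdx − 1` smallest. -/
noncomputable def sdReject {n : ℕ} (k : ℕ) (P : Fin n → Ω → ℝ) (a : ℕ → ℝ) (m : Fin n)
    (ω : Ω) : Prop :=
  (Finset.univ.filter fun l => P l ω ≤ P m ω).card < stopIdx k P a ω

theorem countP_ofFn' {n : ℕ} (f : Fin n → ℝ) (x : ℝ) :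
    (List.ofFn f).countP (fun y => decide (y ≤ x)) = (Finset.univ.filter fun i => f i ≤ x).card := by
  rw [List.ofFn_eq_map, List.countP_map]
  have h1 : (Finset.univ.filter fun i => f i ≤ x).card
      = Multiset.countP (fun i => f i ≤ x) (Finset.univ.val) := by
    rw [Multiset.countP_eq_card_filter]
    rfl
  rw [h1, Fin.univ_def]
  have h2 : ((⟨List.finRange n, List.nodup_finRange n⟩ : Finset (Fin n)).val)
      = (List.finRange n : Multiset (Fin n)) := rfl
  rw [h2, Multiset.coe_countP]
  rfl

theorem countP_ge_of_sorted' {L : List ℝ} (hs : L.Pairwise (· ≤ ·)) {i : ℕ} (hi : i < L.length) :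
    i + 1 ≤ L.countP (fun y => decide (y ≤ L[i])) := by
  have htake : (L.take (i+1)).countP (fun y => decide (y ≤ L[i])) = i + 1 := by
    rw [List.countP_eq_length.mpr, List.length_take]
    · omega
    · intro x hx
      rw [List.mem_iff_getElem] at hx
      obtain ⟨j, hj, rfl⟩ := hx
      have hj' : j < i + 1 := by
        have : (L.take (i+1)).length = min (i+1) L.length := List.length_take; omega
      rw [List.getElem_take]
      simp only [decide_eq_true_eq]
      rcases Nat.lt_or_ge j i with h | h
      · exact List.pairwise_iff_getElem.mp hs j i (by omega) hi h
      · have : j = i := by omega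
        subst this; exact le_refl _
  rw [← htake]
  exact (List.take_sublist (i+1) L).countP_le

theorem le_getD_of_sorted' {L : List ℝ} (hs : L.Pairwise (· ≤ ·)) {c : ℝ} (hc : c ∈ L) :
    c ≤ L.getD (L.countP (fun y => decide (y ≤ c)) - 1) 0 := by
  rw [List.mem_iff_getElem] at hc
  obtain ⟨idx, hidx, rfl⟩ := hc
  have h1 : idx + 1 ≤ L.countP (fun y => decide (y ≤ L[idx])) := countP_ge_of_sorted' hs hidx
  have h2 : L.countP (fun y => decide (y ≤ L[idx])) ≤ L.length := List.countP_le_length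
  have h3 : L.countP (fun y => decide (y ≤ L[idx])) - 1 < L.length := by omega
  rw [List.getD_eq_getElem _ _ h3]
  rcases Nat.lt_or_ge idx (L.countP (fun y => decide (y ≤ L[idx])) - 1) with h | h
  · exact List.pairwise_iff_getElem.mp hs idx _ hidx h3 h
  · have he : idx = L.countP (fun y => decide (y ≤ L[idx])) - 1 := by omega
    exact le_of_eq (by congr 1)

/-- Stepdown k-FWER control: with critical values `G_k(α_i) = α/C(n+k−i,k)`, if the
generalized stepdown procedure rejects at least `k` of the `n₀ ≥ k` true nulls then
`P_{k:n₀} ≤ α_{n−n₀+k}`, and hence the k-FWER is at most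
`C(n₀,k)·G_k(α_{n−n₀+k}) = α`. -/
theorem stmt10 [MeasurableSpace Ω] (μ : Measure Ω) [IsProbabilityMeasure μ]
    (n k n₀ : ℕ) (hk : 1 ≤ k) (hkn₀ : k ≤ n₀) (hn₀n : n₀ ≤ n)
    (P : Fin n → Ω → ℝ) (hmeas : ∀ i, Measurable (P i))
    (T : Finset (Fin n)) (hT : T.card = n₀)
    (Gk : ℝ → ℝ)
    (hGk : ∀ J : Finset (Fin n), J ⊆ T → J.card = k → ∀ u : ℝ,
      μ {ω | ∀ j ∈ J, P j ω ≤ u} = ENNReal.ofReal (Gk u))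
    (α : ℝ) (hα0 : 0 < α) (hα1 : α < 1)
    (a : ℕ → ℝ)
    (hmono : ∀ i ∈ Finset.Icc k n, ∀ j ∈ Finset.Icc k n, i ≤ j → a i ≤ a j)
    (hdef : ∀ i ∈ Finset.Icc k n, Gk (a i) = α / (((n + k - i).choose k : ℝ))) :
    (∀ ω : Ω, k ≤ (T.filter fun m => sdReject k P a m ω).card →
      k ≤ (T.filter fun m => P m ω ≤ a (n - n₀ + k)).card) ∧
    μ {ω | k ≤ (T.filter fun m => sdReject k P a m ω).card} ≤
      ENNReal.ofReal ((n₀.choose k : ℝ) * Gk (a (n - n₀ + k))) ∧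
    (n₀.choose k : ℝ) * Gk (a (n - n₀ + k)) = α := by
  have hkn : k ≤ n := hkn₀.trans hn₀n
  set j0 := n - n₀ + k with hj0
  have hkj0 : k ≤ j0 := Nat.le_add_left _ _
  have hj0n : j0 ≤ n := by omega
  have hj01 : 1 ≤ j0 := hk.trans hkj0
  have part1 : ∀ ω : Ω, k ≤ (T.filter fun m => sdReject k P a m ω).card →
      k ≤ (T.filter fun m => P m ω ≤ a j0).card := by
    intro ω hcard
    set L := List.insertionSort (· ≤ ·) (List.ofFn fun i => P i ω) with hL
    have hlen : L.length = n := by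
      rw [hL, List.length_insertionSort, List.length_ofFn]
    have hsorted : L.Pairwise (· ≤ ·) := by rw [hL]; exact List.pairwise_insertionSort _ _
    have hperm : L.Perm (List.ofFn fun i => P i ω) := by
      rw [hL]; exact List.perm_insertionSort _ _
    have hcount : ∀ x : ℝ, L.countP (fun y => decide (y ≤ x))
        = (Finset.univ.filter fun i => P i ω ≤ x).card := by
      intro x; rw [hperm.countP_eq, countP_ofFn']
    have hord : ∀ j, ordStat P j ω = L.getD (j-1) 0 := by
      intro j; rw [hL]; rfl
    have hnotstop : ∀ j, 1 ≤ j → j ≤ n → j < stopIdx k P a ω →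
        ordStat P j ω < a (max j k) := by
      intro j h1 h2 h3
      by_contra hcon
      push_neg at hcon
      have hmem : j ∈ (Finset.Icc 1 n).filter fun j => a (max j k) ≤ ordStat P j ω := by
        rw [Finset.mem_filter, Finset.mem_Icc]; exact ⟨⟨h1, h2⟩, hcon⟩
      have hne : ((Finset.Icc 1 n).filter fun j => a (max j k) ≤ ordStat P j ω).Nonempty :=
        ⟨j, hmem⟩
      have : stopIdx k P a ω ≤ j := by
        rw [stopIdx, dif_pos hne]; exact Finset.min'_le _ _ hmem
      omega
    by_cases hcase : j0 < stopIdx k P a ω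
    · -- Case A : the procedure has not stopped by step j0
      have hlt : ordStat P j0 ω < a j0 := by
        have := hnotstop j0 hj01 hj0n hcase
        rwa [max_eq_left hkj0] at this
      set c := ordStat P j0 ω with hc
      have hA : j0 ≤ (Finset.univ.filter fun i => P i ω ≤ c).card := by
        rw [← hcount]
        have hce : c = L.getD (j0 - 1) 0 := hord j0
        have hlt' : j0 - 1 < L.length := by omega
        have hkey := countP_ge_of_sorted' hsorted hlt'
        rw [hce, List.getD_eq_getElem _ _ hlt']
        omega
      have hsplit : (Finset.univ.filter fun i => P i ω ≤ c)
          ⊆ (T.filter fun i => P i ω ≤ c) ∪ Tᶜ := by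
        intro i hi
        rw [Finset.mem_filter] at hi
        by_cases hiT : i ∈ T
        · exact Finset.mem_union_left _ (Finset.mem_filter.mpr ⟨hiT, hi.2⟩)
        · exact Finset.mem_union_right _ (Finset.mem_compl.mpr hiT)
      have hcardc : Tᶜ.card = n - n₀ := by
        rw [Finset.card_compl, hT]; simp
      have hchain : (Finset.univ.filter fun i => P i ω ≤ c).card
          ≤ (T.filter fun i => P i ω ≤ c).card + (n - n₀) := by
        calc (Finset.univ.filter fun i => P i ω ≤ c).card
            ≤ ((T.filter fun i => P i ω ≤ c) ∪ Tᶜ).card := Finset.card_le_card hsplit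
          _ ≤ (T.filter fun i => P i ω ≤ c).card + Tᶜ.card := Finset.card_union_le _ _
          _ = (T.filter fun i => P i ω ≤ c).card + (n - n₀) := by rw [hcardc]
      have hTc : k ≤ (T.filter fun i => P i ω ≤ c).card := by omega
      refine hTc.trans (Finset.card_le_card ?_)
      intro m hm
      rw [Finset.mem_filter] at hm ⊢
      exact ⟨hm.1, hm.2.trans hlt.le⟩
    · -- Case B : the procedure stopped at or before step j0
      push_neg at hcase
      refine hcard.trans (Finset.card_le_card ?_)
      intro m hm
      rw [Finset.mem_filter] at hm ⊢
      obtain ⟨hmT, hrej⟩ := hm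
      have hrej' : (Finset.univ.filter fun l => P l ω ≤ P m ω).card < stopIdx k P a ω := hrej
      set r := (Finset.univ.filter fun l => P l ω ≤ P m ω).card with hrdef
      have hr1 : 1 ≤ r := Finset.card_pos.mpr ⟨m, by simp⟩
      have hrn : r ≤ n := le_trans (Finset.card_filter_le _ _) (by simp)
      have hlt : ordStat P r ω < a (max r k) := hnotstop r hr1 hrn hrej'
      have hcmem : P m ω ∈ L := by
        rw [hperm.mem_iff]
        exact List.mem_ofFn.mpr ⟨m, rfl⟩
      have hB : P m ω ≤ ordStat P r ω := by
        have hkey := le_getD_of_sorted' hsorted hcmem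
        rw [hcount (P m ω), ← hrdef] at hkey
        rw [hord]
        exact hkey
      have hrstop : r < j0 := lt_of_lt_of_le hrej' hcase
      have hmax : a (max r k) ≤ a j0 := by
        refine hmono (max r k) ?_ j0 ?_ ?_
        · rw [Finset.mem_Icc]; constructor
          · exact le_max_right _ _
          · exact max_le hrn hkn
        · rw [Finset.mem_Icc]; exact ⟨hkj0, hj0n⟩
        · exact max_le hrstop.le hkj0
      exact ⟨hmT, le_trans hB (le_trans hlt.le hmax)⟩
  have hchoosepos : (0:ℝ) < (n₀.choose k : ℝ) := by
    exact_mod_cast Nat.choose_pos hkn₀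
  have hval : Gk (a j0) = α / (n₀.choose k : ℝ) := by
    have h1 := hdef j0 (Finset.mem_Icc.mpr ⟨hkj0, hj0n⟩)
    have h2 : n + k - j0 = n₀ := by omega
    rw [h2] at h1
    exact h1
  have hGkpos : 0 ≤ Gk (a j0) := by rw [hval]; positivity
  refine ⟨part1, ?_, ?_⟩
  · have hsub : {ω | k ≤ (T.filter fun m => sdReject k P a m ω).card}
        ⊆ ⋃ J ∈ T.powersetCard k, {ω | ∀ j ∈ J, P j ω ≤ a j0} := by
      intro ω hω
      have h1 := part1 ω hω
      obtain ⟨J, hJsub, hJcard⟩ := Finset.exists_subset_card_eq h1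
      refine Set.mem_iUnion₂.mpr ⟨J, ?_, ?_⟩
      · exact Finset.mem_powersetCard.mpr ⟨hJsub.trans (Finset.filter_subset _ _), hJcard⟩
      · intro j hj
        have := hJsub hj
        rw [Finset.mem_filter] at this
        exact this.2
    calc μ {ω | k ≤ (T.filter fun m => sdReject k P a m ω).card}
        ≤ μ (⋃ J ∈ T.powersetCard k, {ω | ∀ j ∈ J, P j ω ≤ a j0}) := measure_mono hsub
      _ ≤ ∑ J ∈ T.powersetCard k, μ {ω | ∀ j ∈ J, P j ω ≤ a j0} :=
          measure_biUnion_finset_le _ _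
      _ = ∑ J ∈ T.powersetCard k, ENNReal.ofReal (Gk (a j0)) := by
          refine Finset.sum_congr rfl fun J hJ => ?_
          rw [Finset.mem_powersetCard] at hJ
          exact hGk J hJ.1 hJ.2 _
      _ = (T.powersetCard k).card • ENNReal.ofReal (Gk (a j0)) := Finset.sum_const _
      _ = ENNReal.ofReal ((n₀.choose k : ℝ) * Gk (a j0)) := by
          rw [Finset.card_powersetCard, hT, nsmul_eq_mul,
            ENNReal.ofReal_mul (by positivity), ENNReal.ofReal_natCast]
  · rw [hval]
    field_simp
end

section
/- For the equicorrelated multivariate normal model, the function G_k(u; ρ) = ∫ [1 − Φ((Φ^{-1}(1−u) − ρ^{1/2} y)/√(1−ρ))]^k φ(y) dy is nondecreasing in ρ ∈ [0,1) for each fixed u ∈ (0,1); equivalently, ∂G_k(u;ρ)/∂ρ ≥ 0. -/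
open MeasureTheory ProbabilityTheory

/-- The standard normal c.d.f. -/
noncomputable def stdNormCDF : ℝ → ℝ := fun x => ProbabilityTheory.cdf (gaussianReal 0 1) x

/-- The standard normal quantile function `Φ⁻¹`. -/
noncomputable def stdNormQuantile : ℝ → ℝ := Function.invFun stdNormCDF

/-- `G_k(u;ρ) = ∫ [1 − Φ((Φ⁻¹(1−u) − √ρ·y)/√(1−ρ))]^k φ(y) dy`. -/
noncomputable def Gfun (k : ℕ) (u ρ : ℝ) : ℝ :=
  ∫ y : ℝ,
    (1 - stdNormCDF ((stdNormQuantile (1 - u) - Real.sqrt ρ * y) / Real.sqrt (1 - ρ))) ^ k *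
      gaussianPDFReal 0 1 y

section Aux

open Real Set
open scoped NNReal ENNReal

lemma pdf_mul (v w : ℝ≥0) (hv : v ≠ 0) (hw : w ≠ 0) (t x : ℝ) :
    gaussianPDFReal 0 v x * gaussianPDFReal 0 w (t - x)
      = gaussianPDFReal 0 (v + w) t * gaussianPDFReal ((v : ℝ) * t / ((v : ℝ) + w)) (v * w / (v + w)) x := by
  have hv' : (0:ℝ) < v := lt_of_le_of_ne v.2 (by exact_mod_cast (Ne.symm hv))
  have hw' : (0:ℝ) < w := lt_of_le_of_ne w.2 (by exact_mod_cast (Ne.symm hw))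
  have hvw : (0:ℝ) < (v:ℝ) + w := by linarith
  have hcoe : ((v * w / (v + w) : ℝ≥0) : ℝ) = (v:ℝ) * w / ((v:ℝ) + w) := by
    push_cast; ring
  simp only [gaussianPDFReal, sub_zero, hcoe, NNReal.coe_add]
  rw [mul_mul_mul_comm, mul_mul_mul_comm ((Real.sqrt (2 * π * ((v:ℝ) + w)))⁻¹)]
  congr 1
  · rw [← mul_inv, ← mul_inv, ← Real.sqrt_mul (by positivity), ← Real.sqrt_mul (by positivity)]
    congr 2
    field_simp
  · rw [← Real.exp_add, ← Real.exp_add]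
    congr 1
    field_simp
    ring

lemma pdf_conv_int (v w : ℝ≥0) (hv : v ≠ 0) (hw : w ≠ 0) (t : ℝ) :
    ∫ x, gaussianPDFReal 0 v x * gaussianPDFReal 0 w (t - x) = gaussianPDFReal 0 (v + w) t := by
  have hne : v * w / (v + w) ≠ 0 := by
    have : v + w ≠ 0 := by simp [hv]
    simp [div_eq_zero_iff, hv, hw, this]
  simp only [pdf_mul v w hv hw t]
  rw [integral_const_mul, integral_gaussianPDFReal_eq_one _ hne, mul_one]

lemma integrable_pdf_conv (v w : ℝ≥0) (hv : v ≠ 0) (hw : w ≠ 0) (t : ℝ) :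
    Integrable (fun x => gaussianPDFReal 0 v x * gaussianPDFReal 0 w (t - x)) := by
  simp only [pdf_mul v w hv hw t]
  exact (integrable_gaussianPDFReal _ _).const_mul _


lemma gaussianReal_conv (v w : ℝ≥0) :
    Measure.map (fun p : ℝ × ℝ => p.1 + p.2) ((gaussianReal 0 v).prod (gaussianReal 0 w))
      = gaussianReal 0 (v + w) := by
  rcases eq_or_ne v 0 with rfl | hv
  · rw [gaussianReal_zero_var, Measure.dirac_prod,
      Measure.map_map (by fun_prop) (by fun_prop)]
    simp [Function.comp_def]
  rcases eq_or_ne w 0 with rfl | hw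
  · rw [gaussianReal_zero_var, Measure.prod_dirac,
      Measure.map_map (by fun_prop) (by fun_prop)]
    simp [Function.comp_def]
  have hvw : v + w ≠ 0 := by simp [hv]
  ext s hs
  rw [Measure.map_apply (by fun_prop) hs, Measure.prod_apply (hs.preimage (by fun_prop))]
  have h1 : ∀ x : ℝ, gaussianReal 0 w (Prod.mk x ⁻¹' ((fun p : ℝ × ℝ => p.1 + p.2) ⁻¹' s))
      = ∫⁻ y, s.indicator (fun _ => (1:ℝ≥0∞)) (x + y) * ENNReal.ofReal (gaussianPDFReal 0 w y) := by
    intro x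
    have hms : MeasurableSet {y : ℝ | x + y ∈ s} := (measurable_const_add x) hs
    rw [show Prod.mk x ⁻¹' ((fun p : ℝ × ℝ => p.1 + p.2) ⁻¹' s) = {y : ℝ | x + y ∈ s} from rfl]
    rw [gaussianReal_apply 0 hw, ← lintegral_indicator hms]
    congr 1
    ext y
    by_cases h : x + y ∈ s <;>
      simp [Set.indicator, h, gaussianPDF]
  simp only [h1]
  rw [gaussianReal_of_var_ne_zero 0 hv,
    lintegral_withDensity_eq_lintegral_mul _ (measurable_gaussianPDF 0 v) ?hG]
  case hG =>
    apply Measurable.lintegral_prod_right' (f := fun p : ℝ × ℝ =>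
      s.indicator (fun _ => (1:ℝ≥0∞)) (p.1 + p.2) * ENNReal.ofReal (gaussianPDFReal 0 w p.2))
    exact ((measurable_const.indicator hs).comp (by fun_prop)).mul
      ((measurable_gaussianPDFReal 0 w).comp measurable_snd).ennreal_ofReal
  have h2 : ∀ x : ℝ, (gaussianPDF 0 v *
      fun x => ∫⁻ y, s.indicator (fun _ => (1:ℝ≥0∞)) (x + y) * ENNReal.ofReal (gaussianPDFReal 0 w y)) x
      = ∫⁻ y, s.indicator (fun _ => (1:ℝ≥0∞)) (x + y) * ENNReal.ofReal (gaussianPDFReal 0 w y)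
          * ENNReal.ofReal (gaussianPDFReal 0 v x) := by
    intro x
    simp only [Pi.mul_apply, gaussianPDF]
    rw [mul_comm, ← lintegral_mul_const' _ _ (by simp)]
  simp only [h2]
  have h3 : ∀ x : ℝ, (∫⁻ y, s.indicator (fun _ => (1:ℝ≥0∞)) (x + y)
        * ENNReal.ofReal (gaussianPDFReal 0 w y) * ENNReal.ofReal (gaussianPDFReal 0 v x))
      = ∫⁻ z, s.indicator (fun _ => (1:ℝ≥0∞)) z
        * ENNReal.ofReal (gaussianPDFReal 0 w (z - x)) * ENNReal.ofReal (gaussianPDFReal 0 v x) := by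
    intro x
    rw [← lintegral_add_left_eq_self (fun z => s.indicator (fun _ => (1:ℝ≥0∞)) z
        * ENNReal.ofReal (gaussianPDFReal 0 w (z - x)) * ENNReal.ofReal (gaussianPDFReal 0 v x)) x]
    congr 1
    ext y
    simp only [add_sub_cancel_left]
  simp only [h3]
  rw [lintegral_lintegral_swap]
  · have h4 : ∀ z : ℝ, (∫⁻ x, s.indicator (fun _ => (1:ℝ≥0∞)) z
        * ENNReal.ofReal (gaussianPDFReal 0 w (z - x)) * ENNReal.ofReal (gaussianPDFReal 0 v x))
        = s.indicator (fun _ => (1:ℝ≥0∞)) z * ENNReal.ofReal (gaussianPDFReal 0 (v + w) z) := by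
      intro z
      simp only [mul_assoc]
      rw [lintegral_const_mul' _ _ (by
        by_cases h : z ∈ s <;> simp [Set.indicator, h])]
      congr 1
      have : ∀ x : ℝ, ENNReal.ofReal (gaussianPDFReal 0 w (z - x))
          * ENNReal.ofReal (gaussianPDFReal 0 v x)
          = ENNReal.ofReal (gaussianPDFReal 0 v x * gaussianPDFReal 0 w (z - x)) := by
        intro x
        rw [← ENNReal.ofReal_mul (gaussianPDFReal_nonneg 0 w _), mul_comm]
      simp only [this]
      rw [← ofReal_integral_eq_lintegral_ofReal (integrable_pdf_conv v w hv hw z)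
        (Filter.Eventually.of_forall fun x =>
          mul_nonneg (gaussianPDFReal_nonneg 0 v x) (gaussianPDFReal_nonneg 0 w _)),
        pdf_conv_int v w hv hw z]
    simp only [h4]
    have h5 : ∀ z : ℝ, s.indicator (fun _ => (1:ℝ≥0∞)) z * ENNReal.ofReal (gaussianPDFReal 0 (v + w) z)
        = s.indicator (fun y => ENNReal.ofReal (gaussianPDFReal 0 (v + w) y)) z := by
      intro z
      by_cases h : z ∈ s <;> simp [Set.indicator, h]
    simp only [h5]
    rw [lintegral_indicator hs, gaussianReal_apply 0 hvw s]
    rfl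
  · apply Measurable.aemeasurable
    apply Measurable.mul
    apply Measurable.mul
    · exact (measurable_const.indicator hs).comp measurable_snd
    · exact ((measurable_gaussianPDFReal 0 w).comp (measurable_snd.sub measurable_fst)).ennreal_ofReal
    · exact ((measurable_gaussianPDFReal 0 v).comp measurable_fst).ennreal_ofReal

noncomputable def tailP (v : ℝ≥0) (a : ℝ) : ℝ := ((gaussianReal 0 v) (Set.Ioi a)).toReal

lemma tailP_nonneg (v : ℝ≥0) (a : ℝ) : 0 ≤ tailP v a := ENNReal.toReal_nonneg

lemma tailP_le_one (v : ℝ≥0) (a : ℝ) : tailP v a ≤ 1 := by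
  have := prob_le_one (μ := gaussianReal 0 v) (s := Set.Ioi a)
  unfold tailP
  exact ENNReal.toReal_le_of_le_ofReal zero_le_one (by simpa using this)

lemma tailP_anti (v : ℝ≥0) : Antitone (tailP v) := by
  intro a b hab
  unfold tailP
  exact ENNReal.toReal_mono (measure_ne_top _ _) (measure_mono (Set.Ioi_subset_Ioi hab))

lemma monotone_tailP_sub (v : ℝ≥0) (c : ℝ) : Monotone (fun x => tailP v (c - x)) :=
  fun a b hab => tailP_anti v (by linarith)

lemma measurable_tailP_sub (v : ℝ≥0) (c : ℝ) : Measurable (fun x => tailP v (c - x)) :=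
  (monotone_tailP_sub v c).measurable

/-- map of std gaussian under multiplication by `√v` -/
lemma map_sqrt_mul (v : ℝ≥0) :
    (gaussianReal 0 1).map (fun x => Real.sqrt v * x) = gaussianReal 0 v := by
  rw [show (fun x : ℝ => Real.sqrt v * x) = (fun x : ℝ => Real.sqrt v * x) from rfl,
    gaussianReal_map_const_mul]
  congr 1
  · simp
  · ext
    push_cast
    rw [mul_one]
    exact Real.sq_sqrt v.2

lemma tailP_eq_cdf {v : ℝ≥0} (hv : v ≠ 0) (a : ℝ) :
    tailP v a = 1 - stdNormCDF (a / Real.sqrt v) := by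
  have hsv : (0:ℝ) < Real.sqrt v := Real.sqrt_pos.mpr
    (lt_of_le_of_ne v.2 (by exact_mod_cast (Ne.symm hv)))
  have hmap : (gaussianReal 0 v) (Set.Ioi a) = (gaussianReal 0 1) (Set.Ioi (a / Real.sqrt v)) := by
    rw [← map_sqrt_mul v, Measure.map_apply (by fun_prop) measurableSet_Ioi]
    congr 1
    ext x
    simp only [Set.mem_preimage, Set.mem_Ioi]
    rw [div_lt_iff₀ hsv, mul_comm]
  unfold tailP stdNormCDF
  rw [hmap, cdf_eq_real, measureReal_def]
  have hIic : (gaussianReal 0 1) (Set.Ioi (a / Real.sqrt v))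
      = 1 - (gaussianReal 0 1) (Set.Iic (a / Real.sqrt v)) := by
    rw [← Set.compl_Iic, prob_compl_eq_one_sub measurableSet_Iic]
  rw [hIic, ENNReal.toReal_sub_of_le prob_le_one ENNReal.one_ne_top, ENNReal.toReal_one]

lemma tailP_conv (v w : ℝ≥0) (a : ℝ) :
    ∫ x, tailP w (a - x) ∂(gaussianReal 0 v) = tailP (v + w) a := by
  have hmeas : ∀ x : ℝ, (gaussianReal 0 w) (Prod.mk x ⁻¹' ((fun p : ℝ × ℝ => p.1 + p.2) ⁻¹' Set.Ioi a))
      = (gaussianReal 0 w) (Set.Ioi (a - x)) := by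
    intro x
    congr 1
    ext y
    simp only [Set.mem_preimage, Set.mem_Ioi, Set.mem_setOf_eq]
    constructor <;> intro h <;> linarith
  have key : (gaussianReal 0 (v + w)) (Set.Ioi a)
      = ∫⁻ x, (gaussianReal 0 w) (Set.Ioi (a - x)) ∂(gaussianReal 0 v) := by
    rw [← gaussianReal_conv v w, Measure.map_apply (by fun_prop) measurableSet_Ioi,
      Measure.prod_apply (measurableSet_Ioi.preimage (by fun_prop))]
    exact lintegral_congr hmeas
  have hmono : Monotone (fun x : ℝ => (gaussianReal 0 w) (Set.Ioi (a - x))) := by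
    intro x y hxy
    exact measure_mono (Set.Ioi_subset_Ioi (by linarith))
  unfold tailP
  rw [key, integral_toReal (hmono.measurable.aemeasurable)
    (Filter.Eventually.of_forall fun x => measure_lt_top _ _)]

lemma integrable_of_bounded01 {α : Type*} {m : MeasurableSpace α} {μ : Measure α}
    [IsFiniteMeasure μ] {f : α → ℝ} (hm : AEStronglyMeasurable f μ)
    (h0 : ∀ x, 0 ≤ f x) (h1 : ∀ x, f x ≤ 1) : Integrable f μ :=
  (integrable_const (1:ℝ)).mono' hm (Filter.Eventually.of_forall fun x => by
    rw [Real.norm_eq_abs, abs_of_nonneg (h0 x)]; exact h1 x)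

lemma pow_integral_le {α : Type*} {m : MeasurableSpace α} {μ : Measure α}
    [IsProbabilityMeasure μ] {f : α → ℝ} (hm : Measurable f)
    (h0 : ∀ x, 0 ≤ f x) (h1 : ∀ x, f x ≤ 1) (k : ℕ) :
    (∫ x, f x ∂μ) ^ k ≤ ∫ x, (f x) ^ k ∂μ := by
  have hg : ConvexOn ℝ (Set.Icc (0:ℝ) 1) (fun x : ℝ => x ^ k) :=
    (convexOn_pow k).subset Set.Icc_subset_Ici_self (convex_Icc 0 1)
  exact hg.map_integral_le ((continuous_pow k).continuousOn) isClosed_Icc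
    (Filter.Eventually.of_forall fun x => ⟨h0 x, h1 x⟩)
    (integrable_of_bounded01 hm.aestronglyMeasurable h0 h1)
    (integrable_of_bounded01 (hm.pow_const k).aestronglyMeasurable
      (fun x => pow_nonneg (h0 x) k) (fun x => pow_le_one₀ (h0 x) (h1 x)))

lemma Gfun_eq (k : ℕ) (u ρ : ℝ) (h0 : 0 ≤ ρ) (h1 : ρ < 1) :
    Gfun k u ρ = ∫ x, (tailP (1 - ρ).toNNReal (stdNormQuantile (1 - u) - x)) ^ k
      ∂(gaussianReal 0 ρ.toNNReal) := by
  set c := stdNormQuantile (1 - u) with hc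
  have h1ρ : (0:ℝ) < 1 - ρ := by linarith
  have hvne : (1 - ρ).toNNReal ≠ 0 := by
    simp [Real.toNNReal_eq_zero, not_le]; linarith
  have hcoe1 : (((1 - ρ).toNNReal : ℝ≥0) : ℝ) = 1 - ρ := Real.coe_toNNReal _ h1ρ.le
  have hcoe2 : ((ρ.toNNReal : ℝ≥0) : ℝ) = ρ := Real.coe_toNNReal _ h0
  have hpt : ∀ y : ℝ, (1 - stdNormCDF ((c - Real.sqrt ρ * y) / Real.sqrt (1 - ρ))) ^ k
      = (tailP (1 - ρ).toNNReal (c - Real.sqrt ρ * y)) ^ k := by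
    intro y
    rw [tailP_eq_cdf hvne, hcoe1]
  have hG : Measurable (fun y : ℝ => (tailP (1 - ρ).toNNReal (c - y)) ^ k) :=
    (measurable_tailP_sub _ c).pow_const k
  calc Gfun k u ρ
      = ∫ y, (tailP (1 - ρ).toNNReal (c - Real.sqrt ρ * y)) ^ k * gaussianPDFReal 0 1 y := by
        unfold Gfun
        congr 1
        ext y
        rw [← hc, hpt y]
    _ = ∫ y, (tailP (1 - ρ).toNNReal (c - Real.sqrt ρ * y)) ^ k ∂(gaussianReal 0 1) := by
        rw [gaussianReal_of_var_ne_zero 0 one_ne_zero]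
        have : gaussianPDF 0 1 = fun y => (((gaussianPDFReal 0 1 y).toNNReal : ℝ≥0) : ℝ≥0∞) := rfl
        rw [this, integral_withDensity_eq_integral_smul
          ((measurable_gaussianPDFReal 0 1).real_toNNReal)]
        congr 1
        ext y
        rw [NNReal.smul_def, smul_eq_mul, Real.coe_toNNReal _ (gaussianPDFReal_nonneg 0 1 y),
          mul_comm]
    _ = ∫ x, (tailP (1 - ρ).toNNReal (c - x)) ^ k ∂(gaussianReal 0 ρ.toNNReal) := by
        rw [← map_sqrt_mul ρ.toNNReal, integral_map (by fun_prop)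
          hG.aestronglyMeasurable, hcoe2]

lemma Gfun_mono (k : ℕ) (u ρ₁ ρ₂ : ℝ) (h0 : 0 ≤ ρ₁) (h12 : ρ₁ ≤ ρ₂) (h2 : ρ₂ < 1) :
    Gfun k u ρ₁ ≤ Gfun k u ρ₂ := by
  set c := stdNormQuantile (1 - u) with hc
  have h1 : ρ₁ < 1 := lt_of_le_of_lt h12 h2
  set w₂ : ℝ≥0 := (1 - ρ₂).toNNReal with hw₂
  set d : ℝ≥0 := (ρ₂ - ρ₁).toNNReal with hd
  have hsum1 : d + w₂ = (1 - ρ₁).toNNReal := by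
    rw [hd, hw₂, ← Real.toNNReal_add (by linarith) (by linarith)]
    congr 1; ring
  have hsum2 : ρ₁.toNNReal + d = ρ₂.toNNReal := by
    rw [hd, ← Real.toNNReal_add h0 (by linarith)]
    congr 1; ring
  set μ₁ := gaussianReal 0 ρ₁.toNNReal
  set ν := gaussianReal 0 d
  have hFmeas : Measurable (fun p : ℝ × ℝ => (tailP w₂ (c - (p.1 + p.2))) ^ k) :=
    ((measurable_tailP_sub w₂ c).comp measurable_add).pow_const k
  have hF0 : ∀ p : ℝ × ℝ, 0 ≤ (tailP w₂ (c - (p.1 + p.2))) ^ k :=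
    fun p => pow_nonneg (tailP_nonneg _ _) k
  have hF1 : ∀ p : ℝ × ℝ, (tailP w₂ (c - (p.1 + p.2))) ^ k ≤ 1 :=
    fun p => pow_le_one₀ (tailP_nonneg _ _) (tailP_le_one _ _)
  -- right side
  have hRHS : Gfun k u ρ₂ = ∫ t, ∫ s, (tailP w₂ (c - (t + s))) ^ k ∂ν ∂μ₁ := by
    rw [Gfun_eq k u ρ₂ (le_trans h0 h12) h2, ← hc, ← hw₂, ← hsum2, ← gaussianReal_conv,
      integral_map (by fun_prop) ((measurable_tailP_sub w₂ c).pow_const k).aestronglyMeasurable,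
      integral_prod _ (integrable_of_bounded01 hFmeas.aestronglyMeasurable hF0 hF1)]
  -- pointwise inequality
  have hpt : ∀ t : ℝ, (tailP (1 - ρ₁).toNNReal (c - t)) ^ k
      ≤ ∫ s, (tailP w₂ (c - (t + s))) ^ k ∂ν := by
    intro t
    have hconv : ∫ s, tailP w₂ ((c - t) - s) ∂ν = tailP (1 - ρ₁).toNNReal (c - t) := by
      rw [tailP_conv d w₂ (c - t), hsum1]
    have := pow_integral_le (μ := ν) (f := fun s => tailP w₂ ((c - t) - s))
      (measurable_tailP_sub w₂ (c - t)) (fun s => tailP_nonneg _ _) (fun s => tailP_le_one _ _) k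
    rw [hconv] at this
    convert this using 2 with s
    ext s
    congr 2
    ring
  have hinner_meas : StronglyMeasurable (fun t : ℝ => ∫ s, (tailP w₂ (c - (t + s))) ^ k ∂ν) :=
    hFmeas.stronglyMeasurable.integral_prod_right'
  have hinner0 : ∀ t : ℝ, 0 ≤ ∫ s, (tailP w₂ (c - (t + s))) ^ k ∂ν :=
    fun t => integral_nonneg (fun s => hF0 (t, s))
  have hinner1 : ∀ t : ℝ, (∫ s, (tailP w₂ (c - (t + s))) ^ k ∂ν) ≤ 1 := by
    intro t
    calc (∫ s, (tailP w₂ (c - (t + s))) ^ k ∂ν) ≤ ∫ _s, (1:ℝ) ∂ν := by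
          apply integral_mono (integrable_of_bounded01
            (((measurable_tailP_sub w₂ c).comp (measurable_const_add t)).pow_const k).aestronglyMeasurable
            (fun s => hF0 (t, s)) (fun s => hF1 (t, s))) (integrable_const 1)
            (fun s => hF1 (t, s))
      _ = 1 := by simp
  rw [hRHS, Gfun_eq k u ρ₁ h0 h1, ← hc]
  apply integral_mono
  · exact integrable_of_bounded01 ((measurable_tailP_sub _ c).pow_const k).aestronglyMeasurable
      (fun t => pow_nonneg (tailP_nonneg _ _) k)
      (fun t => pow_le_one₀ (tailP_nonneg _ _) (tailP_le_one _ _))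
  · exact integrable_of_bounded01 hinner_meas.aestronglyMeasurable hinner0 hinner1
  · exact hpt

end Aux

/-- For the equicorrelated multivariate normal model, `G_k(u;ρ)` is nondecreasing in
`ρ ∈ [0,1)` for each fixed `u ∈ (0,1)`. -/
theorem stmt11 (k : ℕ) (hk : 1 ≤ k) (u : ℝ) (hu : u ∈ Set.Ioo (0 : ℝ) 1) :
    MonotoneOn (fun ρ => Gfun k u ρ) (Set.Ico (0 : ℝ) 1) := by
  intro a ha b hb hab
  exact Gfun_mono k u a b ha.1 hab hb.2
end

section
/- With independent uniform(0,1) p-values and Lehmann–Romano stepup critical values γ_i = kα/(n_0+k−i) for i = k,...,n_0, the k-FWER bound holds via the chain: Pr{∪_{i=k}^{n_0}(P_{i:n_0} ≤ kα/(n_0+k−i))} ≤ Pr{∪_{i=k}^{n_0}(P_{i:n_0} ≤ iα/n_0)} ≤ Pr{∪_{i=1}^{n_0}(P_{i:n_0} ≤ iα/n_0)} = α. In particular kα/(n_0+k−i) ≤ iα/n_0 for all k ≤ i ≤ n_0. -/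
open Finset MeasureTheory ProbabilityTheory

lemma simes_helper (x y : ℝ) (m : ℕ) :
    ∑ k ∈ range (m+1), (k:ℝ) * m.choose k * (x^k * y^(m-k))
      = m * x * (x+y)^(m-1) := by
  cases m with
  | zero => simp
  | succ m =>
    rw [Finset.sum_range_succ']
    have h1 : ∀ k : ℕ, (((k:ℝ)+1)) * ((m+1).choose (k+1) : ℝ) = ((m:ℝ)+1) * (m.choose k) := by
      intro k
      have h2 : (m+1) * m.choose k = (m+1).choose (k+1) * (k+1) := Nat.add_one_mul_choose_eq m k
      have h3 := congrArg (Nat.cast (R := ℝ)) h2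
      push_cast at h3
      linear_combination -h3
    have hc : ∀ k ∈ range (m+1), ((k+1:ℕ):ℝ) * ((m+1).choose (k+1)) * (x^(k+1) * y^(m+1-(k+1)))
        = ((m:ℝ)+1) * x * (m.choose k * (x^k * y^(m-k))) := by
      intro k hk
      have h4 := h1 k
      simp only [Nat.add_sub_add_right]
      push_cast
      linear_combination (x^(k+1) * y^(m-k)) * h4
    rw [Finset.sum_congr rfl hc]
    simp only [Nat.cast_zero, zero_mul, add_zero, Nat.add_sub_cancel]
    rw [add_pow]
    push_cast
    rw [Finset.mul_sum]
    apply Finset.sum_congr rfl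
    intro k hk; ring

/-- The "good" (no-crossing) predicate for a bin assignment into `Fin n`. -/
def SGood {ι : Type*} [Fintype ι] {n : ℕ} (f : ι → Fin n) : Prop :=
  ∀ i : Fin n, (univ.filter fun j => (f j : ℕ) ≤ (i : ℕ)).card ≤ (i : ℕ)

instance {ι : Type*} [Fintype ι] {n : ℕ} (f : ι → Fin n) : Decidable (SGood f) := by
  unfold SGood; infer_instance

/-- Number of good functions `Fin m → Fin n`. -/
def SD (n m : ℕ) : ℕ := (univ.filter fun f : Fin m → Fin n => SGood f).card

lemma card_filter_equiv {ι κ : Type*} [Fintype ι] [Fintype κ]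
    (e : ι ≃ κ) (p : κ → Prop) [DecidablePred p] :
    (univ.filter fun j : ι => p (e j)).card = (univ.filter p).card := by
  apply Finset.card_bij (fun j _ => e j)
  · intro a ha; simp only [mem_filter, mem_univ, true_and] at *; exact ha
  · intro a _ b _ h; exact e.injective h
  · intro b hb; simp only [mem_filter, mem_univ, true_and] at *
    exact ⟨e.symm b, by simpa using hb, by simp⟩

lemma sgood_comp_equiv {ι κ : Type*} [Fintype ι] [Fintype κ] {n : ℕ}
    (e : ι ≃ κ) (f : κ → Fin n) :
    SGood (fun j => f (e j)) ↔ SGood f := by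
  unfold SGood
  refine forall_congr' fun i => ?_
  rw [card_filter_equiv e (fun j => (f j : ℕ) ≤ (i : ℕ))]

lemma card_sgood_eq (n : ℕ) (ι : Type*) [Fintype ι] [DecidableEq ι] :
    (univ.filter fun f : ι → Fin n => SGood f).card = SD n (Fintype.card ι) := by
  classical
  let e := Fintype.equivFin ι
  apply Finset.card_bij (fun f _ => fun j => f (e.symm j))
  · intro f hf; simp only [mem_filter, mem_univ, true_and] at *
    exact (sgood_comp_equiv e.symm f).mpr hf
  · intro f _ g _ h
    funext j
    have := congrFun h (e j); simpa using this
  · intro g hg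
    refine ⟨fun j => g (e j), ?_, ?_⟩
    · simp only [mem_filter, mem_univ, true_and] at *
      exact (sgood_comp_equiv e g).mpr hg
    · funext j; show g (e (e.symm j)) = g j; rw [Equiv.apply_symm_apply]

/-- The "good" predicate for bin assignments into `Fin (n+1)` (top bin `n` unbounded). -/
def TGood {ι : Type*} [Fintype ι] {n : ℕ} (g : ι → Fin (n+1)) : Prop :=
  ∀ i : Fin n, (univ.filter fun j => (g j : ℕ) ≤ (i : ℕ)).card ≤ (i : ℕ)

instance {ι : Type*} [Fintype ι] {n : ℕ} (g : ι → Fin (n+1)) : Decidable (TGood g) := by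
  unfold TGood; infer_instance

lemma card_filter_subtype {ι : Type*} [Fintype ι] (s : Finset ι)
    (p : ι → Prop) [DecidablePred p] :
    (univ.filter fun j : {x // x ∈ s} => p j.1).card = (s.filter p).card := by
  apply Finset.card_bij (fun j _ => j.1)
  · intro a ha; simp only [mem_filter, mem_univ, true_and] at ha
    exact Finset.mem_filter.mpr ⟨a.2, ha⟩
  · intro a _ b _ h; exact Subtype.ext h
  · intro b hb
    simp only [mem_filter] at hb
    exact ⟨⟨b, hb.1⟩, by simp [hb.2], rfl⟩

lemma count_eq_count_compl {ι : Type*} [Fintype ι] [DecidableEq ι] {n : ℕ} (S : Finset ι)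
    (g : ι → Fin (n+1)) (hS : ∀ j ∈ S, g j = Fin.last n) (i : Fin n) :
    (univ.filter fun j => (g j : ℕ) ≤ (i : ℕ)).card
      = (univ.filter fun j : {x // x ∈ Sᶜ} => (g j.1 : ℕ) ≤ (i : ℕ)).card := by
  rw [card_filter_subtype Sᶜ (fun x => (g x : ℕ) ≤ (i : ℕ))]
  congr 1
  ext j
  simp only [mem_filter, mem_univ, true_and, Finset.mem_compl]
  constructor
  · intro h
    refine ⟨fun hj => ?_, h⟩
    have hi := i.isLt
    rw [hS j hj, Fin.val_last] at h
    omega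
  · exact fun h => h.2

lemma fiber_card {ι : Type*} [Fintype ι] [DecidableEq ι] (n : ℕ) (S : Finset ι) :
    ((univ : Finset (ι → Fin (n+1))).filter fun g =>
        TGood g ∧ univ.filter (fun j => g j = Fin.last n) = S).card
      = SD n (Fintype.card ι - S.card) := by
  have hcard : Fintype.card {x // x ∈ Sᶜ} = Fintype.card ι - S.card := by
    rw [Fintype.card_coe, Finset.card_compl]
  rw [← hcard, ← card_sgood_eq n {x // x ∈ Sᶜ}]
  refine Finset.card_bij'
    (fun g hg => fun j => Fin.castPred (g j.1)
      (by
        have h2 := (Finset.mem_filter.mp hg).2.2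
        intro hlast
        have hj : j.1 ∈ univ.filter (fun j => g j = Fin.last n) := by
          simp [hlast]
        rw [h2] at hj
        exact (Finset.mem_compl.mp j.2) hj))
    (fun f _ => fun j => if h : j ∈ S then Fin.last n else
        Fin.castSucc (f ⟨j, Finset.mem_compl.mpr h⟩))
    ?_ ?_ ?_ ?_
  · -- forward lands in SGood
    intro g hg
    obtain ⟨-, hT, hfib⟩ :
        g ∈ univ ∧ TGood g ∧ univ.filter (fun j => g j = Fin.last n) = S := by
      simpa [and_assoc] using Finset.mem_filter.mp hg
    simp only [mem_filter, mem_univ, true_and]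
    intro i
    have hS : ∀ j ∈ S, g j = Fin.last n := by
      intro j hj; rw [← hfib] at hj; exact (Finset.mem_filter.mp hj).2
    have key := count_eq_count_compl S g hS i
    calc (univ.filter fun j : {x // x ∈ Sᶜ} =>
            ((Fin.castPred (g j.1) _ : Fin n) : ℕ) ≤ (i : ℕ)).card
        = (univ.filter fun j : {x // x ∈ Sᶜ} => (g j.1 : ℕ) ≤ (i : ℕ)).card := by
          apply Finset.card_nbij id
          · intro a ha
            simp only [id, Finset.mem_coe, mem_filter, mem_univ, true_and, Fin.coe_castPred] at ha ⊢
            exact (Finset.mem_filter.mp ha).2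
          · exact Function.Injective.injOn (fun a b h => h)
          · intro a ha
            refine ⟨a, ?_, rfl⟩
            simp only [Finset.mem_coe, mem_filter, mem_univ, true_and, Fin.coe_castPred] at ha ⊢
            exact Finset.mem_filter.mpr ⟨Finset.mem_univ _, ha⟩
      _ = (univ.filter fun j => (g j : ℕ) ≤ (i : ℕ)).card := key.symm
      _ ≤ (i : ℕ) := hT i
  · -- backward lands in fiber
    intro f hf
    simp only [mem_filter, mem_univ, true_and] at hf ⊢
    constructor
    · -- TGood
      intro i
      have hS : ∀ j ∈ S, (fun j => if h : j ∈ S then Fin.last n else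
          Fin.castSucc (f ⟨j, Finset.mem_compl.mpr h⟩)) j = Fin.last n := by
        intro j hj; simp [hj]
      rw [count_eq_count_compl S _ hS i]
      calc (univ.filter fun j : {x // x ∈ Sᶜ} =>
              (((if h : j.1 ∈ S then Fin.last n else
                Fin.castSucc (f ⟨j.1, Finset.mem_compl.mpr h⟩)) : Fin (n+1)) : ℕ) ≤ (i : ℕ)).card
          = (univ.filter fun j : {x // x ∈ Sᶜ} => ((f j : Fin n) : ℕ) ≤ (i : ℕ)).card := by
            apply Finset.card_nbij id
            · intro a ha
              have ha1 : a.1 ∉ S := Finset.mem_compl.mp a.2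
              simpa [ha1, Fin.coe_castSucc] using ha
            · exact Function.Injective.injOn (fun a b h => h)
            · intro a ha
              have ha1 : a.1 ∉ S := Finset.mem_compl.mp a.2
              exact ⟨a, by simpa [ha1, Fin.coe_castSucc] using ha, rfl⟩
        _ ≤ (i : ℕ) := hf i
    · -- fiber condition
      ext j
      simp only [mem_filter, mem_univ, true_and]
      constructor
      · intro h
        by_contra hj
        rw [dif_neg hj] at h
        exact (Fin.castSucc_lt_last _).ne h
      · intro hj; rw [dif_pos hj]
  · -- left inverse
    intro g hg
    obtain ⟨-, hT, hfib⟩ :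
        g ∈ univ ∧ TGood g ∧ univ.filter (fun j => g j = Fin.last n) = S := by
      simpa [and_assoc] using Finset.mem_filter.mp hg
    funext j
    beta_reduce
    by_cases hj : j ∈ S
    · rw [dif_pos hj]
      rw [← hfib] at hj
      exact ((Finset.mem_filter.mp hj).2).symm
    · rw [dif_neg hj]
      exact Fin.castSucc_castPred _ _
  · -- right inverse
    intro f hf
    funext j
    apply Fin.ext
    have hj1 : j.1 ∉ S := Finset.mem_compl.mp j.2
    simp [Fin.coe_castPred, hj1]

lemma sd_succ (n m : ℕ) (h : m ≤ n) :
    SD (n+1) m = ∑ k ∈ range (m+1), m.choose k * SD n (m - k) := by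
  have hgood : ∀ f : Fin m → Fin (n+1), SGood f ↔ TGood f := by
    intro f
    constructor
    · intro hf i
      have := hf (Fin.castSucc i)
      simpa using this
    · intro hf i
      rcases Fin.eq_castSucc_or_eq_last i with ⟨i', rfl⟩ | rfl
      · simpa using hf i'
      · calc (univ.filter fun j => (f j : ℕ) ≤ ((Fin.last n : Fin (n+1)) : ℕ)).card
            ≤ (univ : Finset (Fin m)).card := Finset.card_filter_le _ _
          _ = m := by simp
          _ ≤ n := h
          _ = ((Fin.last n : Fin (n+1)) : ℕ) := by simp
  have h1 : SD (n+1) m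
      = ((univ : Finset (Fin m → Fin (n+1))).filter fun f => TGood f).card := by
    unfold SD
    congr 1
    apply Finset.filter_congr
    intro f _
    simp [hgood f]
  rw [h1]
  rw [Finset.card_eq_sum_card_fiberwise
    (f := fun f : Fin m → Fin (n+1) => univ.filter (fun j => f j = Fin.last n))
    (t := (univ : Finset (Fin m)).powerset) (fun x _ => by simp)]
  have h2 : ∀ S ∈ (univ : Finset (Fin m)).powerset,
      (((univ : Finset (Fin m → Fin (n+1))).filter fun f => TGood f).filter
        (fun f => univ.filter (fun j => f j = Fin.last n) = S)).card
      = SD n (m - S.card) := by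
    intro S _
    rw [Finset.filter_filter]
    have := fiber_card n S
    simpa using this
  rw [Finset.sum_congr rfl h2]
  have h3 := Finset.sum_powerset_apply_card (fun k => SD n (m - k))
    (x := (univ : Finset (Fin m)))
  simpa [Finset.card_univ] using h3

lemma simes_alg (x : ℝ) (m : ℕ) :
    (∑ j ∈ range (m+1), (m.choose j : ℝ) * ((x - j) * x^j)) * (x+1)
      = (x+1-m) * (x+1)^m * x := by
  have h1 : ∑ j ∈ range (m+1), (m.choose j : ℝ) * ((x - j) * x^j)
      = x*(x+1)^m - m*x*(x+1)^(m-1) := by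
    have hb : (x+1)^m = ∑ j ∈ range (m+1), x^j * (1:ℝ)^(m-j) * m.choose j := add_pow x 1 m
    have hh := simes_helper x 1 m
    calc ∑ j ∈ range (m+1), (m.choose j : ℝ) * ((x - j) * x^j)
        = ∑ j ∈ range (m+1),
            (x * (x^j * (1:ℝ)^(m-j) * m.choose j)
              - (j:ℝ) * m.choose j * (x^j * (1:ℝ)^(m-j))) := by
          apply Finset.sum_congr rfl
          intro j _
          simp only [one_pow]
          ring
      _ = x * (∑ j ∈ range (m+1), x^j * (1:ℝ)^(m-j) * m.choose j)
            - ∑ j ∈ range (m+1), (j:ℝ) * m.choose j * (x^j * (1:ℝ)^(m-j)) := by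
          rw [Finset.sum_sub_distrib, Finset.mul_sum]
      _ = x*(x+1)^m - m*x*(x+1)^(m-1) := by rw [← hb, hh]
  rw [h1]
  cases m with
  | zero => simp; ring
  | succ m =>
    have : (m+1) - 1 = m := rfl
    rw [this, pow_succ]
    push_cast
    ring

lemma sd_diag (n : ℕ) : SD (n+1) (n+1) = 0 := by
  unfold SD
  rw [Finset.card_eq_zero, Finset.filter_eq_empty_iff]
  intro f _ hf
  have h1 := hf (Fin.last n)
  have h2 : (univ.filter fun j : Fin (n+1) => (f j : ℕ) ≤ ((Fin.last n) : ℕ)) = univ := by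
    apply Finset.filter_true_of_mem
    intro j _
    simp only [Fin.val_last]
    exact Nat.lt_succ_iff.mp (f j).isLt
  rw [h2] at h1
  simp only [Finset.card_univ, Fintype.card_fin, Fin.val_last] at h1
  omega

lemma sd_zero_zero : SD 0 0 = 1 := by decide

lemma sd_mul : ∀ n : ℕ, ∀ m ≤ n, (SD n m : ℝ) * n = ((n:ℝ) - m) * (n:ℝ)^m := by
  intro n
  induction n with
  | zero =>
    intro m hm
    interval_cases m
    simp
  | succ n ih =>
    intro m hm
    rcases eq_or_lt_of_le hm with rfl | hlt
    · rw [sd_diag]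
      push_cast
      ring
    · have hmn : m ≤ n := Nat.lt_succ_iff.mp hlt
      rw [sd_succ n m hmn]
      rcases Nat.eq_zero_or_pos n with rfl | hn
      · interval_cases m
        simp [sd_zero_zero]
      · have hne : (n:ℝ) ≠ 0 := by positivity
        apply mul_right_cancel₀ hne
        push_cast
        have hstep : (∑ k ∈ range (m+1), ((m.choose k : ℝ) * SD n (m-k))) * (n:ℝ)
            = ∑ j ∈ range (m+1), (m.choose j : ℝ) * (((n:ℝ) - j) * (n:ℝ)^j) := by
          rw [Finset.sum_mul, ← Finset.sum_range_reflect
            (fun j => (m.choose j : ℝ) * (((n:ℝ) - (j:ℕ)) * (n:ℝ)^(j:ℕ))) (m+1)]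
          apply Finset.sum_congr rfl
          intro k hk
          have hk' : k ≤ m := Nat.lt_succ_iff.mp (Finset.mem_range.mp hk)
          have h5 : m - k ≤ n := le_trans (Nat.sub_le m k) hmn
          have hih := ih (m - k) h5
          simp only [Nat.add_sub_cancel]
          rw [mul_assoc, hih, ← Nat.choose_symm hk']
        rw [mul_right_comm, hstep, simes_alg]

lemma tgood_weighted_sum (n : ℕ) (hn : 1 ≤ n) (α : ℝ) :
    ∑ g ∈ (univ : Finset (Fin n → Fin (n+1))).filter (fun g => TGood g),
      (∏ j, (if g j = Fin.last n then 1 - α else α / n)) = 1 - α := by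
  have hne : (n:ℝ) ≠ 0 := by positivity
  -- fiberwise over the set of coordinates mapped to the top bin
  rw [← Finset.sum_fiberwise_of_maps_to
    (g := fun g : Fin n → Fin (n+1) => univ.filter (fun j => g j = Fin.last n))
    (t := (univ : Finset (Fin n)).powerset) (fun x _ => by simp)]
  have h2 : ∀ S ∈ (univ : Finset (Fin n)).powerset,
      ∑ g ∈ ((univ : Finset (Fin n → Fin (n+1))).filter (fun g => TGood g)).filter
          (fun g => univ.filter (fun j => g j = Fin.last n) = S),
        (∏ j, (if g j = Fin.last n then 1 - α else α / n))
      = (SD n (n - S.card) : ℝ) * ((1-α)^S.card * (α/n)^(n - S.card)) := by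
    intro S _
    have hconst : ∀ g ∈ ((univ : Finset (Fin n → Fin (n+1))).filter (fun g => TGood g)).filter
          (fun g => univ.filter (fun j => g j = Fin.last n) = S),
        (∏ j, (if g j = Fin.last n then 1 - α else α / n))
          = (1-α)^S.card * (α/n)^(n - S.card) := by
      intro g hg
      simp only [Finset.mem_filter, mem_univ, true_and] at hg
      obtain ⟨hT, hfib⟩ := hg
      rw [← Finset.prod_filter_mul_prod_filter_not univ (fun j => g j = Fin.last n)]
      rw [hfib]
      rw [Finset.prod_congr rfl (fun j hj => if_pos (by
        rw [← hfib] at hj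
        exact (Finset.mem_filter.mp hj).2)), Finset.prod_const]
      have hfib' : univ.filter (fun j => ¬ (g j = Fin.last n)) = Sᶜ := by
        rw [← hfib]; ext j; simp
      rw [hfib']
      rw [Finset.prod_congr rfl (fun j hj => if_neg (by
        have := Finset.mem_compl.mp hj
        rw [← hfib] at this
        simpa using this)), Finset.prod_const]
      rw [Finset.card_compl, Fintype.card_fin]
    rw [Finset.sum_congr rfl hconst, Finset.sum_const, Finset.filter_filter]
    have hfc := fiber_card n S
    simp only [Fintype.card_fin] at hfc
    rw [hfc]
    rw [nsmul_eq_mul]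
  rw [Finset.sum_congr rfl h2]
  have h3 := Finset.sum_powerset_apply_card
    (fun k => (SD n (n - k) : ℝ) * ((1-α)^k * (α/n)^(n - k)))
    (x := (univ : Finset (Fin n)))
  simp only [Finset.card_univ, Fintype.card_fin, smul_eq_mul] at h3
  rw [h3]
  -- now a pure identity
  apply mul_right_cancel₀ hne
  rw [Finset.sum_mul]
  simp only [nsmul_eq_mul]
  have h4 : ∀ k ∈ range (n+1),
      (n.choose k : ℝ) * ((SD n (n - k) : ℝ) * ((1-α)^k * (α/n)^(n - k))) * n
      = (((n:ℝ) - ((n-k:ℕ):ℝ)) * α^((n-k:ℕ)) * (1-α)^k * (n.choose k : ℝ)) := by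
    intro k hk
    have hk' : k ≤ n := Nat.lt_succ_iff.mp (Finset.mem_range.mp hk)
    have hih := sd_mul n (n - k) (Nat.sub_le n k)
    have hpow : ((n:ℝ))^(n-k) * (α/n)^(n-k) = α^(n-k) := by
      rw [← mul_pow, mul_div_cancel₀ _ hne]
    calc (n.choose k : ℝ) * ((SD n (n - k) : ℝ) * ((1-α)^k * (α/n)^(n - k))) * n
        = ((SD n (n-k) : ℝ) * n) * ((α/n)^(n-k)) * (1-α)^k * (n.choose k) := by ring
      _ = (((n:ℝ) - ((n-k:ℕ):ℝ)) * ((n:ℝ)^(n-k) * (α/n)^(n-k))) * (1-α)^k * (n.choose k) := by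
          rw [hih]; ring
      _ = (((n:ℝ) - ((n-k:ℕ):ℝ)) * α^((n-k:ℕ)) * (1-α)^k * (n.choose k : ℝ)) := by
          rw [hpow]
  rw [Finset.sum_congr rfl h4]
  have h5 : ∀ k ∈ range (n+1), ((n:ℝ) - ((n-k:ℕ):ℝ)) * α^(n-k) * (1-α)^k * (n.choose k : ℝ)
      = (k:ℝ) * (n.choose k) * ((1-α)^k * α^(n-k)) := by
    intro k hk
    have hk' : k ≤ n := Nat.lt_succ_iff.mp (Finset.mem_range.mp hk)
    rw [Nat.cast_sub hk']
    ring
  rw [Finset.sum_congr rfl h5, simes_helper (1-α) α n]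
  have h6 : (1-α) + α = 1 := by ring
  rw [h6, one_pow]
  ring

lemma tbad_weighted_sum (n : ℕ) (hn : 1 ≤ n) (α : ℝ) :
    ∑ g ∈ (univ : Finset (Fin n → Fin (n+1))).filter (fun g => ¬ TGood g),
      (∏ j, (if g j = Fin.last n then 1 - α else α / n)) = α := by
  have hne : (n:ℝ) ≠ 0 := by positivity
  have hsum : ∑ v : Fin (n+1), (if v = Fin.last n then 1 - α else α / n) = 1 := by
    rw [← Finset.add_sum_erase _ _ (Finset.mem_univ (Fin.last n))]
    rw [if_pos rfl]
    rw [Finset.sum_congr rfl (fun v hv => if_neg (Finset.ne_of_mem_erase hv))]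
    rw [Finset.sum_const, Finset.card_erase_of_mem (Finset.mem_univ _), Finset.card_univ,
      Fintype.card_fin]
    simp only [Nat.add_sub_cancel, nsmul_eq_mul]
    field_simp
    ring
  have htot : ∑ g : Fin n → Fin (n+1),
      (∏ j, (if g j = Fin.last n then 1 - α else α / n)) = 1 := by
    rw [← Fintype.piFinset_univ,
      Finset.sum_prod_piFinset (univ : Finset (Fin (n+1)))
        (fun _ v => if v = Fin.last n then 1 - α else α / n)]
    rw [Finset.prod_congr rfl (fun j _ => hsum), Finset.prod_const, one_pow]
  have hsplit := Finset.sum_filter_add_sum_filter_not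
    (univ : Finset (Fin n → Fin (n+1))) (fun g => TGood g)
    (fun g => ∏ j, (if g j = Fin.last n then 1 - α else α / n))
  rw [tgood_weighted_sum n hn α, htot] at hsplit
  linarith

/-- The bins: `v < n` gives `(vα/n, (v+1)α/n]`, and `v = n` the top bin `(α, 1)`. -/
def simesBin (n : ℕ) (α : ℝ) (v : Fin (n+1)) : Set ℝ :=
  if (v:ℕ) = n then Set.Ioo α 1 else Set.Ioc (((v:ℕ):ℝ)*α/n) ((((v:ℕ):ℝ)+1)*α/n)

lemma simesBin_measurable (n : ℕ) (α : ℝ) (v : Fin (n+1)) :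
    MeasurableSet (simesBin n α v) := by
  unfold simesBin
  split
  · exact measurableSet_Ioo
  · exact measurableSet_Ioc

variable {n : ℕ} {α : ℝ}

lemma simesBin_subset (hn : 1 ≤ n) (hα0 : 0 < α) (hα1 : α < 1) (v : Fin (n+1)) :
    simesBin n α v ⊆ Set.Ioo 0 1 := by
  have hn' : (0:ℝ) < n := by positivity
  unfold simesBin
  split_ifs with hv
  · exact Set.Ioo_subset_Ioo hα0.le le_rfl
  · have hv1 : ((v:ℕ):ℝ) + 1 ≤ (n:ℝ) := by
      have : (v:ℕ) + 1 ≤ n := by have := v.isLt; omega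
      exact_mod_cast this
    intro y hy
    obtain ⟨hy1, hy2⟩ := hy
    constructor
    · have h0 : (0:ℝ) ≤ ((v:ℕ):ℝ)*α/n := by positivity
      linarith
    · have : (((v:ℕ):ℝ)+1)*α/n ≤ α := by
        rw [div_le_iff₀ hn']
        nlinarith
      linarith

lemma simesBin_le_iff (hn : 1 ≤ n) (hα0 : 0 < α) (hα1 : α < 1) (v : Fin (n+1)) {y : ℝ}
    (hy : y ∈ simesBin n α v) (i : ℕ) (hi1 : 1 ≤ i) (hi2 : i ≤ n) :
    y ≤ (i:ℝ)*α/n ↔ (v:ℕ) < i := by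
  have hn' : (0:ℝ) < n := by positivity
  have hin : ((i:ℕ):ℝ) ≤ (n:ℝ) := by exact_mod_cast hi2
  unfold simesBin at hy
  split_ifs at hy with hv
  · have hle : (i:ℝ)*α/n ≤ α := by
      rw [div_le_iff₀ hn']; nlinarith
    constructor
    · intro h; exact absurd h (by push_neg; linarith [hy.1])
    · intro h; exact absurd h (by omega)
  · obtain ⟨hy1, hy2⟩ := hy
    constructor
    · intro h
      by_contra hc
      push_neg at hc
      have : ((i:ℕ):ℝ) ≤ ((v:ℕ):ℝ) := by exact_mod_cast hc
      have : (i:ℝ)*α/n ≤ ((v:ℕ):ℝ)*α/n := by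
        rw [div_le_div_iff₀ hn' hn']
        nlinarith [mul_le_mul_of_nonneg_right (mul_le_mul_of_nonneg_right this hα0.le) hn'.le]
      linarith
    · intro h
      have : ((v:ℕ):ℝ) + 1 ≤ (i:ℝ) := by exact_mod_cast h
      have : (((v:ℕ):ℝ)+1)*α/n ≤ (i:ℝ)*α/n := by
        rw [div_le_div_iff₀ hn' hn']
        nlinarith [mul_le_mul_of_nonneg_right (mul_le_mul_of_nonneg_right this hα0.le) hn'.le]
      linarith

lemma simesBin_exists (hn : 1 ≤ n) (hα0 : 0 < α) (hα1 : α < 1) {y : ℝ}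
    (hy : y ∈ Set.Ioo (0:ℝ) 1) : ∃ v : Fin (n+1), y ∈ simesBin n α v := by
  have hn' : (0:ℝ) < n := by positivity
  obtain ⟨hy0, hy1⟩ := hy
  rcases le_or_gt y α with hcase | hcase
  · set c : ℕ := ⌈y*n/α⌉₊ with hc
    have hpos : 0 < y*n/α := by positivity
    have hc1 : 1 ≤ c := Nat.ceil_pos.mpr hpos
    have hc2 : c ≤ n := by
      apply Nat.ceil_le.mpr
      rw [div_le_iff₀ hα0]
      nlinarith
    refine ⟨⟨c - 1, by omega⟩, ?_⟩
    have hvn : (c - 1 : ℕ) ≠ n := by omega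
    unfold simesBin
    rw [if_neg hvn]
    have hcast : (((c-1 : ℕ)):ℝ) = (c:ℝ) - 1 := by
      have : (1:ℕ) ≤ c := hc1
      push_cast [Nat.cast_sub this]
      ring
    have hF1 : y*n/α ≤ (c:ℝ) := Nat.le_ceil _
    have hF2 : (c:ℝ) < y*n/α + 1 := Nat.ceil_lt_add_one hpos.le
    have hq : y*n/α*α = y*n := div_mul_cancel₀ _ (ne_of_gt hα0)
    constructor
    · show (((c-1:ℕ)):ℝ)*α/n < y
      rw [hcast, div_lt_iff₀ hn']
      nlinarith
    · show y ≤ ((((c-1:ℕ)):ℝ)+1)*α/n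
      rw [hcast, le_div_iff₀ hn']
      nlinarith
  · refine ⟨Fin.last n, ?_⟩
    unfold simesBin
    rw [if_pos (Fin.val_last n)]
    exact ⟨hcase, hy1⟩

lemma simesBin_unique (hn : 1 ≤ n) (hα0 : 0 < α) (hα1 : α < 1) {y : ℝ} {v v' : Fin (n+1)}
    (h1 : y ∈ simesBin n α v) (h2 : y ∈ simesBin n α v') : v = v' := by
  have hn' : (0:ℝ) < n := by positivity
  have key : ∀ (a b : Fin (n+1)), (a:ℕ) < (b:ℕ) →
      y ∈ simesBin n α a → y ∈ simesBin n α b → False := by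
    intro a b hab ha hb
    have han : (a:ℕ) ≠ n := by have := b.isLt; omega
    unfold simesBin at ha hb
    rw [if_neg han] at ha
    split_ifs at hb with hbn
    · -- b is the top bin : α < y, but y ≤ (a+1)α/n ≤ α
      have h3 : (((a:ℕ):ℝ)+1) ≤ (n:ℝ) := by
        have : (a:ℕ)+1 ≤ n := by have := a.isLt; omega
        exact_mod_cast this
      have h4 : (((a:ℕ):ℝ)+1)*α/n ≤ α := by
        rw [div_le_iff₀ hn']; nlinarith
      have := ha.2
      linarith [hb.1]
    · -- both interior bins, a < b
      have h3 : (((a:ℕ):ℝ)+1) ≤ (((b:ℕ):ℝ)) := by exact_mod_cast hab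
      have h4 : (((a:ℕ):ℝ)+1)*α/n ≤ ((b:ℕ):ℝ)*α/n := by
        rw [div_le_div_iff₀ hn' hn']
        nlinarith [mul_le_mul_of_nonneg_right (mul_le_mul_of_nonneg_right h3 hα0.le) hn'.le]
      linarith [ha.2, hb.1]
  rcases lt_trichotomy ((v:ℕ)) ((v':ℕ)) with h | h | h
  · exact (key v v' h h1 h2).elim
  · exact Fin.ext h
  · exact (key v' v h h2 h1).elim

lemma simesBin_volume (hn : 1 ≤ n) (hα0 : 0 < α) (hα1 : α < 1) (v : Fin (n+1)) :
    MeasureTheory.volume (simesBin n α v)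
      = ENNReal.ofReal (if v = Fin.last n then 1 - α else α / n) := by
  have hvl : (v = Fin.last n) ↔ ((v:ℕ) = n) := by
    rw [Fin.ext_iff, Fin.val_last]
  unfold simesBin
  by_cases hv : (v:ℕ) = n
  · rw [if_pos hv, if_pos (hvl.mpr hv), Real.volume_Ioo]
  · rw [if_neg hv, if_neg (fun h => hv (hvl.mp h)), Real.volume_Ioc]
    congr 1
    ring

open MeasureTheory

lemma cnt_set_measurable (n : ℕ) (t : ℝ) (i : ℕ) :
    MeasurableSet {x : Fin n → ℝ | i ≤ (univ.filter fun j => x j ≤ t).card} := by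
  have hset : {x : Fin n → ℝ | i ≤ (univ.filter fun j => x j ≤ t).card}
      = ⋃ (S : Finset (Fin n)) (_ : i ≤ S.card), ⋂ j ∈ S, {x : Fin n → ℝ | x j ≤ t} := by
    ext x
    simp only [Set.mem_setOf_eq, Set.mem_iUnion, Set.mem_iInter]
    constructor
    · intro h
      exact ⟨univ.filter fun j => x j ≤ t, h, fun j hj => (Finset.mem_filter.mp hj).2⟩
    · rintro ⟨S, hS, hmem⟩
      calc i ≤ S.card := hS
        _ ≤ (univ.filter fun j => x j ≤ t).card := by
            apply Finset.card_le_card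
            intro j hj
            exact Finset.mem_filter.mpr ⟨Finset.mem_univ j, hmem j hj⟩
  rw [hset]
  apply MeasurableSet.iUnion; intro S
  apply MeasurableSet.iUnion; intro _
  apply MeasurableSet.biInter (Set.to_countable _)
  intro j _
  exact measurableSet_le (measurable_pi_apply j) measurable_const

lemma simes_pi_measure (n : ℕ) (hn : 1 ≤ n) (α : ℝ) (hα0 : 0 < α) (hα1 : α < 1) :
    (Measure.pi fun _ : Fin n => volume.restrict (Set.Ioo (0:ℝ) 1))
      (⋃ i ∈ Finset.Icc 1 n,
        {x : Fin n → ℝ | i ≤ (univ.filter fun j => x j ≤ (i:ℝ)*α/n).card})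
      = ENNReal.ofReal α := by
  have hprob : IsProbabilityMeasure (volume.restrict (Set.Ioo (0:ℝ) 1)) := by
    constructor
    rw [Measure.restrict_apply_univ, Real.volume_Ioo]
    norm_num
  haveI : ∀ j : Fin n, IsProbabilityMeasure
      ((fun _ : Fin n => volume.restrict (Set.Ioo (0:ℝ) 1)) j) := fun _ => hprob
  set ν := Measure.pi fun _ : Fin n => volume.restrict (Set.Ioo (0:ℝ) 1) with hν
  haveI : IsProbabilityMeasure ν := by
    constructor
    rw [hν, ← Set.pi_univ Set.univ, Measure.pi_pi]
    simp
  set E := ⋃ i ∈ Finset.Icc 1 n,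
      {x : Fin n → ℝ | i ≤ (univ.filter fun j => x j ≤ (i:ℝ)*α/n).card} with hE
  set B₀ : Set (Fin n → ℝ) := Set.pi Set.univ (fun _ => Set.Ioo (0:ℝ) 1) with hB₀
  have hB₀m : MeasurableSet B₀ := MeasurableSet.univ_pi (fun _ => measurableSet_Ioo)
  have hB₀1 : ν B₀ = 1 := by
    rw [hB₀, Measure.pi_pi]
    simp [Measure.restrict_apply_self, Real.volume_Ioo]
  have hcompl : ν B₀ᶜ = 0 := by
    rw [measure_compl hB₀m (measure_ne_top ν B₀), hB₀1, measure_univ, tsub_self]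
  have hνE : ν E = ν (E ∩ B₀) := (measure_inter_conull hcompl).symm
  -- decompose E ∩ B₀ into boxes
  set Box : (Fin n → Fin (n+1)) → Set (Fin n → ℝ) :=
    fun g => Set.pi Set.univ (fun j => simesBin n α (g j)) with hBox
  set badG := (univ : Finset (Fin n → Fin (n+1))).filter (fun g => ¬ TGood g) with hbadG
  have hdecomp : E ∩ B₀ = ⋃ g ∈ badG, Box g := by
    ext x
    simp only [Set.mem_inter_iff, Set.mem_iUnion, exists_prop]
    constructor
    · rintro ⟨hxE, hxB⟩
      have hxB' : ∀ j, x j ∈ Set.Ioo (0:ℝ) 1 := fun j => hxB j (Set.mem_univ j)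
      have hex : ∀ j, ∃ v : Fin (n+1), x j ∈ simesBin n α v :=
        fun j => simesBin_exists hn hα0 hα1 (hxB' j)
      choose g hg using hex
      refine ⟨g, ?_, fun j _ => hg j⟩
      rw [hbadG, Finset.mem_filter]
      refine ⟨Finset.mem_univ _, ?_⟩
      rw [hE] at hxE
      simp only [Set.mem_iUnion, exists_prop, Finset.mem_Icc, Set.mem_setOf_eq] at hxE
      obtain ⟨i, ⟨hi1, hi2⟩, hcnt⟩ := hxE
      intro hT
      have hT' := hT ⟨i - 1, by omega⟩
      have hfil : (univ.filter fun j => x j ≤ (i:ℝ)*α/n)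
          = (univ.filter fun j => ((g j : ℕ)) ≤ ((⟨i - 1, by omega⟩ : Fin n) : ℕ)) := by
        apply Finset.filter_congr
        intro j _
        try simp only [eq_iff_iff]
        rw [simesBin_le_iff hn hα0 hα1 (g j) (hg j) i hi1 hi2]
        show (g j : ℕ) < i ↔ (g j : ℕ) ≤ i - 1
        omega
      rw [hfil] at hcnt
      have : ((⟨i - 1, by omega⟩ : Fin n) : ℕ) = i - 1 := rfl
      omega
    · rintro ⟨g, hgbad, hxg⟩
      have hxg' : ∀ j, x j ∈ simesBin n α (g j) := fun j => hxg j (Set.mem_univ j)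
      have hxB : ∀ j, x j ∈ Set.Ioo (0:ℝ) 1 :=
        fun j => simesBin_subset hn hα0 hα1 (g j) (hxg' j)
      refine ⟨?_, fun j _ => hxB j⟩
      rw [hbadG, Finset.mem_filter] at hgbad
      have hbad := hgbad.2
      unfold TGood at hbad
      push_neg at hbad
      obtain ⟨i', hi'⟩ := hbad
      rw [hE]
      simp only [Set.mem_iUnion, exists_prop, Finset.mem_Icc, Set.mem_setOf_eq]
      refine ⟨(i' : ℕ) + 1, ⟨by omega, by have := i'.isLt; omega⟩, ?_⟩
      have hfil : (univ.filter fun j => x j ≤ (((i':ℕ)+1 : ℕ):ℝ)*α/n)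
          = (univ.filter fun j => ((g j : ℕ)) ≤ (i' : ℕ)) := by
        apply Finset.filter_congr
        intro j _
        try simp only [eq_iff_iff]
        rw [simesBin_le_iff hn hα0 hα1 (g j) (hxg' j) ((i':ℕ)+1) (by omega)
          (by have := i'.isLt; omega)]
        omega
      rw [hfil]
      omega
  rw [hνE, hdecomp]
  rw [measure_biUnion_finset ?hd ?hm]
  case hd =>
    intro g hg g' hg' hne
    obtain ⟨j, hj⟩ := Function.ne_iff.mp hne
    apply Set.disjoint_left.mpr
    intro x hx hx'
    exact hj (simesBin_unique hn hα0 hα1 (hx j (Set.mem_univ j)) (hx' j (Set.mem_univ j)))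
  case hm =>
    intro g _
    exact MeasurableSet.univ_pi (fun j => simesBin_measurable n α (g j))
  have hbox : ∀ g : Fin n → Fin (n+1),
      ν (Box g) = ENNReal.ofReal (∏ j, (if g j = Fin.last n then 1 - α else α / n)) := by
    intro g
    rw [hBox, hν, Measure.pi_pi]
    rw [ENNReal.ofReal_prod_of_nonneg (fun j _ => by
      split_ifs
      · linarith
      · positivity)]
    apply Finset.prod_congr rfl
    intro j _
    rw [Measure.restrict_apply (simesBin_measurable n α (g j)),
      Set.inter_eq_left.mpr (simesBin_subset hn hα0 hα1 (g j)),
      simesBin_volume hn hα0 hα1 (g j)]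
  rw [Finset.sum_congr rfl (fun g _ => hbox g)]
  rw [← ENNReal.ofReal_sum_of_nonneg (fun g _ => Finset.prod_nonneg (fun j _ => by
    split_ifs
    · linarith
    · positivity))]
  rw [hbadG, tbad_weighted_sum n hn α]

open ProbabilityTheory


/-- With i.i.d. uniform(0,1) p-values and Lehmann–Romano stepup critical values
`kα/(n₀+k−i)`, `i = k,…,n₀`, one has `kα/(n₀+k−i) ≤ iα/n₀` for all `k ≤ i ≤ n₀`, and the
k-FWER bound holds via the chain
`Pr{∪_{i=k}^{n₀}(P_{i:n₀} ≤ kα/(n₀+k−i))} ≤ Pr{∪_{i=k}^{n₀}(P_{i:n₀} ≤ iα/n₀)}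
  ≤ Pr{∪_{i=1}^{n₀}(P_{i:n₀} ≤ iα/n₀)} = α` (Simes' identity). -/
theorem stmt17 {Ω : Type*} [MeasurableSpace Ω] (μ : Measure Ω) [IsProbabilityMeasure μ]
    (n₀ k : ℕ) (hk : 1 ≤ k) (hkn : k ≤ n₀)
    (P : Fin n₀ → Ω → ℝ) (hmeas : ∀ i, Measurable (P i))
    (hindep : iIndepFun P μ)
    (hunif : ∀ i, Measure.map (P i) μ = volume.restrict (Set.Ioo (0 : ℝ) 1))
    (α : ℝ) (hα0 : 0 < α) (hα1 : α < 1) :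
    (∀ i ∈ Finset.Icc k n₀,
      (k : ℝ) * α / ((n₀ : ℝ) + k - i) ≤ (i : ℝ) * α / n₀) ∧
    μ (⋃ i ∈ Finset.Icc k n₀,
        {ω | i ≤ (Finset.univ.filter fun j =>
          P j ω ≤ (k : ℝ) * α / ((n₀ : ℝ) + k - i)).card}) ≤
      μ (⋃ i ∈ Finset.Icc k n₀,
        {ω | i ≤ (Finset.univ.filter fun j => P j ω ≤ (i : ℝ) * α / n₀).card}) ∧
    μ (⋃ i ∈ Finset.Icc k n₀,
        {ω | i ≤ (Finset.univ.filter fun j => P j ω ≤ (i : ℝ) * α / n₀).card}) ≤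
      μ (⋃ i ∈ Finset.Icc 1 n₀,
        {ω | i ≤ (Finset.univ.filter fun j => P j ω ≤ (i : ℝ) * α / n₀).card}) ∧
    μ (⋃ i ∈ Finset.Icc 1 n₀,
        {ω | i ≤ (Finset.univ.filter fun j => P j ω ≤ (i : ℝ) * α / n₀).card}) =
      ENNReal.ofReal α := by
  have hn : 1 ≤ n₀ := le_trans hk hkn
  have hn' : (0:ℝ) < n₀ := by positivity
  have hineq : ∀ i ∈ Finset.Icc k n₀,
      (k : ℝ) * α / ((n₀ : ℝ) + k - i) ≤ (i : ℝ) * α / n₀ := by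
    intro i hi
    rw [Finset.mem_Icc] at hi
    obtain ⟨hik, hin⟩ := hi
    have hki : (k:ℝ) ≤ i := by exact_mod_cast hik
    have hiN : (i:ℝ) ≤ n₀ := by exact_mod_cast hin
    have hk1 : (1:ℝ) ≤ k := by exact_mod_cast hk
    have hden : (0:ℝ) < (n₀:ℝ) + k - i := by linarith
    rw [div_le_div_iff₀ hden hn']
    nlinarith [mul_nonneg (mul_nonneg (sub_nonneg.mpr hki) (sub_nonneg.mpr hiN)) hα0.le]
  refine ⟨hineq, ?_, ?_, ?_⟩
  · apply measure_mono
    intro ω hω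
    simp only [Set.mem_iUnion, exists_prop, Set.mem_setOf_eq] at hω ⊢
    obtain ⟨i, hi, h⟩ := hω
    refine ⟨i, hi, le_trans h (Finset.card_le_card fun j hj => ?_)⟩
    rw [Finset.mem_filter] at hj ⊢
    exact ⟨hj.1, le_trans hj.2 (hineq i hi)⟩
  · apply measure_mono
    intro ω hω
    simp only [Set.mem_iUnion, exists_prop, Finset.mem_Icc] at hω ⊢
    obtain ⟨i, ⟨hi1, hi2⟩, h⟩ := hω
    exact ⟨i, ⟨le_trans hk hi1, hi2⟩, h⟩
  · have hX : Measurable fun ω (j : Fin n₀) => P j ω := measurable_pi_lambda _ hmeas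
    have hmap : Measure.pi (fun _ : Fin n₀ => volume.restrict (Set.Ioo (0:ℝ) 1))
        = Measure.map (fun ω j => P j ω) μ := by
      apply Measure.pi_eq
      intro s hs
      rw [Measure.map_apply hX (MeasurableSet.univ_pi hs)]
      have hpre : (fun ω (j : Fin n₀) => P j ω) ⁻¹' (Set.pi Set.univ s)
          = ⋂ j ∈ (Finset.univ : Finset (Fin n₀)), P j ⁻¹' (s j) := by
        ext ω
        simp [Set.mem_pi]
      rw [hpre, hindep.measure_inter_preimage_eq_mul Finset.univ (fun i _ => hs i)]
      apply Finset.prod_congr rfl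
      intro j _
      rw [← hunif j, Measure.map_apply (hmeas j) (hs j)]
    have hE'm : MeasurableSet (⋃ i ∈ Finset.Icc 1 n₀,
        {x : Fin n₀ → ℝ | i ≤ (Finset.univ.filter fun j => x j ≤ (i:ℝ)*α/n₀).card}) :=
      Finset.measurableSet_biUnion _ (fun i _ => cnt_set_measurable n₀ _ i)
    have hpre2 : (⋃ i ∈ Finset.Icc 1 n₀,
        {ω | i ≤ (Finset.univ.filter fun j => P j ω ≤ (i:ℝ)*α/n₀).card})
        = (fun ω (j : Fin n₀) => P j ω) ⁻¹' (⋃ i ∈ Finset.Icc 1 n₀,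
            {x : Fin n₀ → ℝ | i ≤ (Finset.univ.filter fun j => x j ≤ (i:ℝ)*α/n₀).card}) := by
      ext ω
      simp only [Set.mem_iUnion, Set.mem_preimage, Set.mem_setOf_eq]
    rw [hpre2, ← Measure.map_apply hX hE'm, ← hmap]
    exact simes_pi_measure n₀ hn α hα0 hα1
end

section
/- Simes' identity: if P_1,...,P_n are i.i.d. uniform on (0,1), then Pr{P_{i:n} ≤ iα/n for at least one i = 1,...,n} = α, for any 0 < α < 1. -/
open Finset MeasureTheory ProbabilityTheory

namespace Simes

variable (n : ℕ) (a : ℕ → ℕ)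

/-- The walk `f i = i - (a 0 + ... + a (i-1))`. -/
def walk (i : ℕ) : ℤ := (i : ℤ) - ∑ j ∈ range i, (a j : ℤ)

/-- A start `t` is good if the walk strictly rises over the next `n` steps. -/
def IsGood (t : ℕ) : Prop := ∀ i ∈ Icc 1 n, walk a t < walk a (t + i)

variable {n a}

lemma sum_shift (hper : ∀ j, a (j + n) = a j) (i : ℕ) :
    ∑ j ∈ range (i + n), (a j : ℤ) = ∑ j ∈ range i, (a j : ℤ) + ∑ j ∈ range n, (a j : ℤ) := by
  induction i with
  | zero => simp
  | succ i ih =>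
      have h1 : i + 1 + n = (i + n) + 1 := by omega
      rw [h1, Finset.sum_range_succ, ih, hper, Finset.sum_range_succ]
      ring

lemma walk_shift (hper : ∀ j, a (j + n) = a j) (i : ℕ) :
    walk a (i + n) = walk a i + ((n : ℤ) - ∑ j ∈ range n, (a j : ℤ)) := by
  unfold walk
  rw [sum_shift hper]
  push_cast
  ring

lemma walk_step (i : ℕ) : walk a (i + 1) ≤ walk a i + 1 := by
  unfold walk
  rw [Finset.sum_range_succ]
  have : (0 : ℤ) ≤ a i := Int.ofNat_nonneg _
  push_cast
  omega

lemma isGood_add_n (hper : ∀ j, a (j + n) = a j) (t : ℕ) :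
    IsGood n a (t + n) ↔ IsGood n a t := by
  unfold IsGood
  constructor
  · intro h i hi
    have := h i hi
    rw [show t + n + i = (t + i) + n by omega, walk_shift hper, walk_shift hper] at this
    omega
  · intro h i hi
    have := h i hi
    rw [show t + n + i = (t + i) + n by omega, walk_shift hper, walk_shift hper]
    omega

end Simes

namespace Simes
open Finset

open scoped Classical in
lemma card_window (n m : ℕ) (hn : 0 < n) (hm : 0 < m) (h : ℕ → ℤ)
    (h0 : h 0 = 0) (hpos : ∀ r, 1 ≤ r → r ≤ n → 1 ≤ h r)
    (hper : ∀ r, h (r + n) = h r + m)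
    (hstep : ∀ r, h (r + 1) ≤ h r + 1) :
    ((range n).filter (fun r => ∀ i ∈ Icc 1 n, h r < h (r + i))).card = m := by
  classical
  have hn' : h n = m := by have := hper 0; rw [h0] at this; simpa using this
  have h2n : h (2 * n) = m + m := by
    have := hper n; rw [hn'] at this
    have e : 2 * n = n + n := by omega
    rw [e, this]
  -- the "last time ≤ v" function
  have hne : ∀ v : ℕ, ((range (2 * n + 1)).filter (fun s => h s ≤ (v : ℤ))).Nonempty := by
    intro v
    exact ⟨0, by simp [h0]⟩
  set R : ℕ → ℕ := fun v => (((range (2 * n + 1)).filter (fun s => h s ≤ (v : ℤ))).max'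
    (hne v)) with hR
  have hRmem : ∀ v : ℕ, R v ∈ (range (2 * n + 1)).filter (fun s => h s ≤ (v : ℤ)) :=
    fun v => Finset.max'_mem _ _
  have hRle : ∀ v, R v ≤ 2 * n := by
    intro v; have := hRmem v; rw [Finset.mem_filter, Finset.mem_range] at this; omega
  have hRh : ∀ v, h (R v) ≤ (v : ℤ) := by
    intro v; have := hRmem v; rw [Finset.mem_filter] at this; exact this.2
  have hRmax : ∀ (v : ℕ) (s : ℕ), s ≤ 2 * n → h s ≤ (v : ℤ) → s ≤ R v := by
    intro v s hs hhs
    exact Finset.le_max' _ s (by rw [Finset.mem_filter, Finset.mem_range]; exact ⟨by omega, hhs⟩)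
  have hRne : ∀ v, v < m → R v ≠ 2 * n := by
    intro v hv he
    have := hRh v
    rw [he, h2n] at this
    omega
  have hRval : ∀ v, v < m → h (R v) = (v : ℤ) := by
    intro v hv
    have h1 : R v + 1 ≤ 2 * n := by have := hRle v; have := hRne v hv; omega
    have h2 : ¬ (h (R v + 1) ≤ (v : ℤ)) := by
      intro hc
      have := hRmax v (R v + 1) h1 hc
      omega
    have := hstep (R v)
    have := hRh v
    omega
  have hRlt : ∀ v, v < m → R v < n := by
    intro v hv
    by_contra hc
    push_neg at hc
    rcases Nat.lt_or_ge n (R v) with hlt | hge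
    · -- R v > n
      have e : R v = (R v - n) + n := by omega
      have := hper (R v - n)
      rw [← e] at this
      have hval := hRval v hv
      have hub : 1 ≤ h (R v - n) := hpos (R v - n) (by omega) (by have := hRle v; omega)
      omega
    · have e : R v = n := by omega
      have := hRval v hv
      rw [e, hn'] at this
      omega
  have hRgood : ∀ v, v < m → ∀ i ∈ Icc 1 n, h (R v) < h (R v + i) := by
    intro v hv i hi
    rw [Finset.mem_Icc] at hi
    have h1 : R v + i ≤ 2 * n := by have := hRlt v hv; omega
    have h2 : ¬ (R v + i ≤ R v) := by omega
    have h3 : ¬ (h (R v + i) ≤ (v : ℤ)) := fun hc => h2 (hRmax v _ h1 hc)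
    rw [hRval v hv]
    omega
  -- now show the filter is the image of R over range m
  have hset : (range n).filter (fun r => ∀ i ∈ Icc 1 n, h r < h (r + i))
      = (range m).image R := by
    ext r
    simp only [Finset.mem_filter, Finset.mem_image, Finset.mem_range]
    constructor
    · rintro ⟨hrn, hgood⟩
      have hge : 0 ≤ h r := by
        rcases Nat.eq_zero_or_pos r with h' | h'
        · rw [h', h0]
        · have := hpos r h' (by omega); omega
      have hlt : h r < m := by
        have := hgood (n - r) (by rw [Finset.mem_Icc]; omega)
        rw [show r + (n - r) = n by omega, hn'] at this
        exact this
      refine ⟨(h r).toNat, by omega, ?_⟩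
      -- show R (h r).toNat = r
      have hcast : ((h r).toNat : ℤ) = h r := Int.toNat_of_nonneg hge
      have hmem : r ≤ R (h r).toNat := hRmax _ r (by omega) (le_of_eq hcast.symm)
      have hmax : R (h r).toNat ≤ r := by
        by_contra hc
        push_neg at hc
        set s := R (h r).toNat with hs
        have hs2n : s ≤ 2 * n := hRle _
        have hhs : h s ≤ h r := by rw [← hcast]; exact hRh _
        rcases le_or_gt (s - r) n with hile | higt
        · have := hgood (s - r) (by rw [Finset.mem_Icc]; omega)
          rw [show r + (s - r) = s by omega] at this
          omega
        · have e : s = (s - n) + n := by omega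
          have hp := hper (s - n)
          rw [← e] at hp
          have := hgood (s - n - r) (by rw [Finset.mem_Icc]; omega)
          rw [show r + (s - n - r) = s - n by omega] at this
          omega
      omega
    · rintro ⟨v, hv, rfl⟩
      exact ⟨hRlt v hv, hRgood v hv⟩
  have hinj : Set.InjOn R (range m) := by
    intro v hv v' hv' he
    rw [Finset.mem_coe, Finset.mem_range] at hv hv'
    have h1 := hRval v hv
    have h2 := hRval v' hv'
    rw [he] at h1
    omega
  rw [hset, Finset.card_image_of_injOn hinj, Finset.card_range]

end Simes

namespace Simes
open Finset

open scoped Classical in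
lemma card_good {n : ℕ} {a : ℕ → ℕ} (hn : 0 < n) (hper : ∀ j, a (j + n) = a j)
    {k : ℕ} (hsum : ∑ j ∈ range n, a j = k) (hk : k ≤ n) :
    ((range n).filter (fun t => IsGood n a t)).card = n - k := by
  have hsumZ : ∑ j ∈ range n, (a j : ℤ) = (k : ℤ) := by
    rw [← Nat.cast_sum, hsum]
  by_cases hkn : k = n
  · rw [Finset.card_eq_zero.mpr, hkn, Nat.sub_self]
    rw [Finset.filter_eq_empty_iff]
    intro t _ hgood
    have := hgood n (by rw [Finset.mem_Icc]; omega)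
    rw [walk_shift hper, hsumZ, hkn] at this
    simp at this
  · have hk' : k < n := lt_of_le_of_ne hk hkn
    set m := n - k with hmdef
    have hm : 0 < m := by omega
    have hmZ : (n : ℤ) - ∑ j ∈ range n, (a j : ℤ) = (m : ℤ) := by
      rw [hsumZ]; push_cast; omega
    -- find the last minimizer of the walk on [0, n)
    obtain ⟨t₀, ht₀mem, ht₀min⟩ :=
      Finset.exists_min_image (range n) (walk a) ⟨0, by simp [hn]⟩
    have hMne : ((range n).filter (fun s => walk a s = walk a t₀)).Nonempty :=
      ⟨t₀, by rw [Finset.mem_filter]; exact ⟨ht₀mem, rfl⟩⟩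
    set ts : ℕ := ((range n).filter (fun s => walk a s = walk a t₀)).max' hMne with hts
    have htsmem := Finset.max'_mem _ hMne
    rw [Finset.mem_filter, Finset.mem_range] at htsmem
    obtain ⟨htslt, htsval⟩ := htsmem
    have htsmin : ∀ s ∈ range n, walk a ts ≤ walk a s := by
      intro s hs; rw [htsval]; exact ht₀min s hs
    have htslast : ∀ s, ts < s → s < n → walk a ts < walk a s := by
      intro s h1 h2
      rcases lt_or_eq_of_le (htsmin s (by rw [Finset.mem_range]; exact h2)) with h | h
      · exact h
      · exfalso
        have : s ≤ ts := Finset.le_max' _ s (by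
          rw [Finset.mem_filter, Finset.mem_range]
          exact ⟨h2, by rw [← h, htsval]⟩)
        omega
    -- the normalized walk
    set h : ℕ → ℤ := fun r => walk a (ts + r) - walk a ts with hhdef
    have hwin := card_window n m hn hm h (by simp [hhdef])
      (by
        intro r hr1 hrn
        simp only [hhdef]
        rcases lt_or_ge (ts + r) n with hc | hc
        · have := htslast (ts + r) (by omega) hc
          omega
        · have e : ts + r = (ts + r - n) + n := by omega
          have hw := walk_shift hper (ts + r - n)
          rw [← e, hmZ] at hw
          have := htsmin (ts + r - n) (by rw [Finset.mem_range]; omega)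
          omega)
      (by
        intro r
        simp only [hhdef]
        have := walk_shift hper (ts + r)
        rw [hmZ] at this
        rw [show ts + (r + n) = (ts + r) + n by omega, this]
        ring)
      (by
        intro r
        simp only [hhdef]
        have := walk_step (a := a) (ts + r)
        rw [show ts + (r + 1) = (ts + r) + 1 by omega]
        omega)
    -- the window predicate is goodness of ts + r
    have hpred : ∀ r : ℕ, (∀ i ∈ Icc 1 n, h r < h (r + i)) ↔ IsGood n a (ts + r) := by
      intro r
      unfold IsGood
      constructor
      · intro hh i hi
        have := hh i hi
        simp only [hhdef] at this
        rw [show ts + (r + i) = (ts + r) + i by omega] at this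
        omega
      · intro hh i hi
        have := hh i hi
        simp only [hhdef]
        rw [show ts + (r + i) = (ts + r) + i by omega]
        omega
    have hwin2 : ((range n).filter (fun r => IsGood n a (ts + r))).card = m := by
      rw [← hwin]
      congr 1
      ext r
      simp only [Finset.mem_filter, hpred r]
    -- transport along r ↦ (ts + r) % n
    have hbij : ((range n).filter (fun r => IsGood n a (ts + r))).card
        = ((range n).filter (fun t => IsGood n a t)).card := by
      apply Finset.card_bij (fun r _ => (ts + r) % n)
      · intro r hr
        rw [Finset.mem_filter, Finset.mem_range] at hr ⊢
        obtain ⟨hrn, hgood⟩ := hr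
        refine ⟨Nat.mod_lt _ hn, ?_⟩
        rcases lt_or_ge (ts + r) n with hc | hc
        · rw [Nat.mod_eq_of_lt hc]; exact hgood
        · have e : (ts + r) % n = ts + r - n := by
            rw [Nat.mod_eq_sub_mod hc, Nat.mod_eq_of_lt (by omega)]
          rw [e]
          have := (isGood_add_n hper (ts + r - n)).mp
          rw [show ts + r - n + n = ts + r by omega] at this
          exact this hgood
      · intro r hr r' hr' he
        rw [Finset.mem_filter, Finset.mem_range] at hr hr'
        have key : ∀ x : ℕ, n ≤ x → x < 2 * n → x % n = x - n := by
          intro x h1 h2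
          rw [Nat.mod_eq_sub_mod h1, Nat.mod_eq_of_lt (by omega)]
        rcases lt_or_ge (ts + r) n with hc | hc <;> rcases lt_or_ge (ts + r') n with hc' | hc'
        · rw [Nat.mod_eq_of_lt hc, Nat.mod_eq_of_lt hc'] at he; omega
        · rw [Nat.mod_eq_of_lt hc, key _ hc' (by omega)] at he; omega
        · rw [Nat.mod_eq_of_lt hc', key _ hc (by omega)] at he; omega
        · rw [key _ hc (by omega), key _ hc' (by omega)] at he; omega
      · intro t ht
        rw [Finset.mem_filter, Finset.mem_range] at ht
        obtain ⟨htn, hgood⟩ := ht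
        rcases le_or_gt ts t with hc | hc
        · refine ⟨t - ts, ?_, ?_⟩
          · rw [Finset.mem_filter, Finset.mem_range]
            constructor
            · omega
            · rw [show ts + (t - ts) = t by omega]; exact hgood
          · rw [show ts + (t - ts) = t by omega, Nat.mod_eq_of_lt htn]
        · refine ⟨t + n - ts, ?_, ?_⟩
          · rw [Finset.mem_filter, Finset.mem_range]
            constructor
            · omega
            · rw [show ts + (t + n - ts) = t + n by omega]
              exact (isGood_add_n hper t).mpr hgood
          · rw [show ts + (t + n - ts) = t + n by omega, Nat.add_mod_right,
              Nat.mod_eq_of_lt htn]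
    omega

end Simes

namespace Simes
open Finset

lemma walk_sub {a : ℕ → ℕ} (s i : ℕ) :
    walk a (s + i) = walk a s + (i : ℤ) - ∑ l ∈ range i, (a (s + l) : ℤ) := by
  induction i with
  | zero => simp
  | succ i ih =>
      rw [show s + (i + 1) = (s + i) + 1 by omega]
      unfold walk at *
      rw [Finset.sum_range_succ, Finset.sum_range_succ]
      push_cast at ih ⊢
      omega

lemma notGood_iff {n : ℕ} {a : ℕ → ℕ} (s : ℕ) :
    ¬ IsGood n a s ↔ ∃ i ∈ Icc 1 n, i ≤ ∑ l ∈ range i, a (s + l) := by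
  unfold IsGood
  push_neg
  constructor
  · rintro ⟨i, hi, hw⟩
    refine ⟨i, hi, ?_⟩
    rw [walk_sub s i] at hw
    have : (i : ℤ) ≤ ∑ l ∈ range i, (a (s + l) : ℤ) := by omega
    exact_mod_cast this
  · rintro ⟨i, hi, hw⟩
    refine ⟨i, hi, ?_⟩
    rw [walk_sub s i]
    have : (i : ℤ) ≤ ∑ l ∈ range i, (a (s + l) : ℤ) := by exact_mod_cast hw
    omega

open scoped Classical in
lemma card_bad {n : ℕ} {a : ℕ → ℕ} (hn : 0 < n) (hper : ∀ j, a (j + n) = a j)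
    {k : ℕ} (hsum : ∑ j ∈ range n, a j = k) (hk : k ≤ n) :
    ((range n).filter (fun t => ∃ i ∈ Icc 1 n, i ≤ ∑ l ∈ range i, a (l + (n - t)))).card
      = k := by
  have hpe : ∀ t, (∃ i ∈ Icc 1 n, i ≤ ∑ l ∈ range i, a (l + (n - t)))
      ↔ ¬ IsGood n a (n - t) := by
    intro t
    rw [notGood_iff]
    constructor
    · rintro ⟨i, hi, hw⟩
      exact ⟨i, hi, by rw [show (fun l => a ((n - t) + l)) = fun l => a (l + (n - t)) by
        funext l; rw [Nat.add_comm]]; exact hw⟩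
    · rintro ⟨i, hi, hw⟩
      exact ⟨i, hi, by rw [show (fun l => a (l + (n - t))) = fun l => a ((n - t) + l) by
        funext l; rw [Nat.add_comm]]; exact hw⟩
  have h1 : ((range n).filter (fun t => ∃ i ∈ Icc 1 n, i ≤ ∑ l ∈ range i, a (l + (n - t)))).card
      = ((range n).filter (fun t => ¬ IsGood n a (n - t))).card := by
    congr 1
    ext t
    simp only [Finset.mem_filter, hpe t]
  have h2 : ((range n).filter (fun t => ¬ IsGood n a (n - t))).card
      = ((range n).filter (fun s => ¬ IsGood n a s)).card := by
    apply Finset.card_bij (fun t _ => (n - t) % n)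
    · intro t ht
      rw [Finset.mem_filter, Finset.mem_range] at ht ⊢
      obtain ⟨htn, hbad⟩ := ht
      refine ⟨Nat.mod_lt _ hn, ?_⟩
      rcases Nat.eq_zero_or_pos t with rfl | hpos
      · rw [Nat.sub_zero, Nat.mod_self]
        intro hg
        exact hbad (by rw [Nat.sub_zero]; simpa using (isGood_add_n hper 0).mpr hg)
      · rw [Nat.mod_eq_of_lt (by omega)]
        exact hbad
    · intro t ht t' ht' he
      rw [Finset.mem_filter, Finset.mem_range] at ht ht'
      rcases Nat.eq_zero_or_pos t with rfl | hp <;> rcases Nat.eq_zero_or_pos t' with rfl | hp'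
      · rfl
      · rw [Nat.sub_zero, Nat.mod_self, Nat.mod_eq_of_lt (by omega)] at he; omega
      · rw [Nat.sub_zero, Nat.mod_self, Nat.mod_eq_of_lt (by omega)] at he; omega
      · rw [Nat.mod_eq_of_lt (by omega), Nat.mod_eq_of_lt (by omega)] at he; omega
    · intro s hs
      rw [Finset.mem_filter, Finset.mem_range] at hs
      obtain ⟨hsn, hbad⟩ := hs
      rcases Nat.eq_zero_or_pos s with rfl | hp
      · refine ⟨0, ?_, by rw [Nat.sub_zero, Nat.mod_self]⟩
        rw [Finset.mem_filter, Finset.mem_range]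
        refine ⟨hn, ?_⟩
        rw [Nat.sub_zero]
        intro hg
        exact hbad ((isGood_add_n hper 0).mp (by simpa using hg))
      · refine ⟨n - s, ?_, ?_⟩
        · rw [Finset.mem_filter, Finset.mem_range]
          refine ⟨by omega, ?_⟩
          rw [show n - (n - s) = s by omega]
          exact hbad
        · rw [show n - (n - s) = s by omega, Nat.mod_eq_of_lt hsn]
  rw [h1, h2]
  have h3 := card_good hn hper hsum hk
  have h4 : ((range n).filter (fun s => ¬ IsGood n a s)).card
      = n - ((range n).filter (fun s => IsGood n a s)).card := by
    rw [Finset.filter_not, Finset.card_sdiff_of_subset (Finset.filter_subset _ _), Finset.card_range]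
  omega

end Simes

namespace Simes
open Finset

/-- Rotation by `t` steps of size `α/n` on `(0, α)`, identity above `α`. -/
noncomputable def rot (n : ℕ) (α : ℝ) (t : ℕ) (u : ℝ) : ℝ :=
  if u < α - t * (α / n) then u + t * (α / n)
  else if u < α then u + t * (α / n) - α else u

lemma measurable_rot (n : ℕ) (α : ℝ) (t : ℕ) : Measurable (rot n α t) := by
  unfold rot
  apply Measurable.ite (measurableSet_Iio)
  · exact measurable_id.add_const _
  · apply Measurable.ite (measurableSet_Iio)
    · exact (measurable_id.add_const _).add_const _
    · exact measurable_id

lemma nat_mod_inv {n t l u : ℕ} (ht : t < n) (hl : l < n) (hu : u < n) :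
    (u + t) % n = l ↔ u = (l + (n - t)) % n := by
  constructor
  · intro h
    rw [← h, Nat.mod_add_mod, show u + t + (n - t) = u + n by omega, Nat.add_mod_right,
      Nat.mod_eq_of_lt hu]
  · intro h
    rw [h, Nat.mod_add_mod, show l + (n - t) + t = l + n by omega, Nat.add_mod_right,
      Nat.mod_eq_of_lt hl]

set_option maxHeartbeats 1000000 in
lemma rot_le_iff {n t i : ℕ} {α u : ℝ} (hn : 0 < n) (hα0 : 0 < α)
    (ht : t < n) (hi1 : 1 ≤ i) (hin : i ≤ n)
    (hu0 : 0 < u) (hne : ∀ q : ℕ, q ≤ n → u ≠ q * (α / n)) :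
    rot n α t u ≤ (i : ℝ) * α / n ↔
      (u < α ∧ (⌈u / (α / n)⌉₊ - 1 + t) % n + 1 ≤ i) := by
  set c : ℝ := α / n with hcdef
  have hc : 0 < c := div_pos hα0 (by exact_mod_cast hn)
  have hnc : (n : ℝ) * c = α := by
    have : (n : ℝ) ≠ 0 := by exact_mod_cast hn.ne'
    rw [hcdef]; field_simp
  have hic : (i : ℝ) * α / n = (i : ℝ) * c := by
    rw [hcdef]; ring
  have hicα : (i : ℝ) * c ≤ α := by
    have : (i : ℝ) ≤ n := by exact_mod_cast hin
    nlinarith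
  rw [hic]
  by_cases huα : u < α
  · -- u below α : it gets rotated
    set m : ℕ := ⌈u / c⌉₊ with hmdef
    have hm1 : 1 ≤ m := by
      rw [hmdef]
      exact Nat.one_le_iff_ne_zero.mpr (by
        simp only [ne_eq, Nat.ceil_eq_zero, not_le]
        positivity)
    have hm2 : m ≤ n := by
      rw [hmdef, Nat.ceil_le, div_le_iff₀ hc]
      nlinarith
    have hhigh : u < (m : ℝ) * c := by
      have hle : u ≤ (m : ℝ) * c := by
        have := Nat.le_ceil (u / c)
        rw [← hmdef] at this
        calc u = (u / c) * c := by field_simp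
        _ ≤ (m : ℝ) * c := by nlinarith
      rcases lt_or_eq_of_le hle with h | h
      · exact h
      · exact absurd h (hne m hm2)
    have hlow : ((m : ℝ) - 1) * c < u := by
      have h1 : (m - 1 : ℕ) < m := by omega
      rw [hmdef] at h1
      have := (Nat.lt_ceil).mp h1
      have hcast : ((m - 1 : ℕ) : ℝ) = (m : ℝ) - 1 := by
        push_cast [hm1]; ring
      rw [hcast] at this
      calc ((m : ℝ) - 1) * c < (u / c) * c := by nlinarith
      _ = u := by field_simp
    have hd0 : (0 : ℝ) ≤ (t : ℝ) * c := by positivity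
    by_cases hcase : u < α - (t : ℝ) * c
    · -- no wrap-around
      have hrot : rot n α t u = u + (t : ℝ) * c := by
        rw [rot, if_pos (by rw [← hcdef]; exact hcase)]
      have hmtn : m + t ≤ n := by
        have h1 : ((m : ℝ) - 1) * c < (n : ℝ) * c - (t : ℝ) * c := by
          rw [hnc]; linarith
        have h2 : (m : ℝ) - 1 + t < n := by nlinarith
        have h3 : ((m + t : ℕ) : ℝ) < (n : ℝ) + 1 := by push_cast; linarith
        have := (Nat.cast_lt (α := ℝ)).mp (by exact_mod_cast h3)
        omega
      have hmod : (m - 1 + t) % n + 1 = m + t ∨ (m - 1 + t < n) := by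
        right; omega
      have hmodeq : (m - 1 + t) % n = m - 1 + t := Nat.mod_eq_of_lt (by omega)
      rw [hrot, hmodeq]
      constructor
      · intro hle
        constructor
        · exact huα
        · by_contra hcon
          push_neg at hcon
          have hi : i ≤ m + t - 1 := by omega
          have hiR : (i : ℝ) ≤ (m : ℝ) + (t : ℝ) - 1 := by
            have : ((i : ℕ) : ℝ) ≤ ((m + t - 1 : ℕ) : ℝ) := by exact_mod_cast hi
            push_cast [show 1 ≤ m + t by omega] at this
            linarith
          nlinarith
      · rintro ⟨-, hcon⟩
        have hi : m + t ≤ i := by omega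
        have hiR : (m : ℝ) + (t : ℝ) ≤ (i : ℝ) := by exact_mod_cast hi
        nlinarith
    · -- wrap-around
      push_neg at hcase
      have hrot : rot n α t u = u + (t : ℝ) * c - α := by
        rw [rot, if_neg (by rw [← hcdef]; push_neg; exact hcase), if_pos huα]
      have hgtn : n < m + t := by
        have h1 : ((n : ℝ) - t) * c ≤ u := by rw [sub_mul]; rw [hnc] at *; linarith
        have h2 : (n : ℝ) - t < m := by nlinarith
        have h3 : ((n : ℕ) : ℝ) < ((m + t : ℕ) : ℝ) := by push_cast; linarith
        exact_mod_cast h3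
      have hmodeq : (m - 1 + t) % n = m - 1 + t - n := by
        rw [Nat.mod_eq_sub_mod (by omega), Nat.mod_eq_of_lt (by omega)]
      rw [hrot, hmodeq]
      have hpcast : ((m + t - n : ℕ) : ℝ) = (m : ℝ) + t - n := by
        push_cast [show n ≤ m + t by omega]; ring
      constructor
      · intro hle
        refine ⟨huα, ?_⟩
        by_contra hcon
        push_neg at hcon
        have hi : i ≤ m + t - n - 1 := by omega
        have hiR : (i : ℝ) ≤ (m : ℝ) + t - n - 1 := by
          have h4 : ((i : ℕ) : ℝ) ≤ ((m + t - n - 1 : ℕ) : ℝ) := by exact_mod_cast hi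
          have h5 : ((m + t - n - 1 : ℕ) : ℝ) = ((m + t - n : ℕ) : ℝ) - 1 := by
            rw [Nat.cast_sub (by omega : 1 ≤ m + t - n)]
            simp
          rw [h5, hpcast] at h4
          linarith
        have : u + (t : ℝ) * c - α > ((m : ℝ) - 1 + t - n) * c := by
          rw [← hnc]; nlinarith
        nlinarith
      · rintro ⟨-, hcon⟩
        have hi : m + t - n ≤ i := by omega
        have hiR : (m : ℝ) + t - n ≤ (i : ℝ) := by
          rw [← hpcast]; exact_mod_cast hi
        have : u + (t : ℝ) * c - α < ((m : ℝ) + t - n) * c := by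
          rw [← hnc]; nlinarith
        nlinarith
  · -- u above α : fixed, and never ≤ i c
    push_neg at huα
    have huα' : α < u := by
      rcases lt_or_eq_of_le huα with h | h
      · exact h
      · exfalso
        exact hne n le_rfl (by rw [← h, hcdef]; field_simp)
    have hrot : rot n α t u = u := by
      have hd0' : (0 : ℝ) ≤ (t : ℝ) * c := by positivity
      rw [rot, if_neg (by push_neg; rw [← hcdef]; linarith), if_neg (by push_neg; linarith)]
    rw [hrot]
    constructor
    · intro h
      exfalso
      linarith
    · rintro ⟨h, -⟩
      exfalso
      linarith

end Simes

namespace Simes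
open Finset

lemma ceil_bounds {n : ℕ} {α u : ℝ} (hn : 0 < n) (hα0 : 0 < α)
    (hu0 : 0 < u) (huα : u < α) :
    1 ≤ ⌈u / (α / n)⌉₊ ∧ ⌈u / (α / n)⌉₊ ≤ n := by
  have hc : 0 < α / n := div_pos hα0 (by exact_mod_cast hn)
  constructor
  · exact Nat.one_le_iff_ne_zero.mpr (by
      simp only [ne_eq, Nat.ceil_eq_zero, not_le]
      positivity)
  · rw [Nat.ceil_le, div_le_iff₀ hc]
    have : (n : ℝ) * (α / n) = α := by field_simp
    nlinarith

open scoped Classical in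
lemma card_filter_rot {n : ℕ} {α : ℝ} (hn : 0 < n) (hα0 : 0 < α) {x : Fin n → ℝ}
    (hx0 : ∀ j, 0 < x j) (hxne : ∀ j, ∀ q : ℕ, q ≤ n → x j ≠ q * (α / n))
    {t i : ℕ} (ht : t < n) (hi1 : 1 ≤ i) (hin : i ≤ n) :
    (univ.filter (fun j => rot n α t (x j) ≤ (i : ℝ) * α / n)).card
      = ∑ l ∈ range i,
          (univ.filter (fun j => x j < α ∧ ⌈x j / (α / n)⌉₊ = (l + (n - t)) % n + 1)).card := by
  have hstep1 : (univ.filter (fun j => rot n α t (x j) ≤ (i : ℝ) * α / n))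
      = (univ.filter (fun j => x j < α ∧ (⌈x j / (α / n)⌉₊ - 1 + t) % n + 1 ≤ i)) := by
    ext j
    simp only [Finset.mem_filter, Finset.mem_univ, true_and]
    exact rot_le_iff hn hα0 ht hi1 hin (hx0 j) (hxne j)
  rw [hstep1]
  rw [Finset.card_eq_sum_card_fiberwise
    (f := fun j => (⌈x j / (α / n)⌉₊ - 1 + t) % n) (t := range i)
    (by
      intro j hj
      rw [Finset.mem_coe, Finset.mem_filter] at hj
      simp only [Finset.mem_coe, Finset.mem_range]
      omega)]
  apply Finset.sum_congr rfl
  intro l hl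
  rw [Finset.mem_range] at hl
  congr 1
  rw [Finset.filter_filter]
  apply Finset.filter_congr
  intro j _
  constructor
  · rintro ⟨⟨hjα, hle⟩, hmod⟩
    refine ⟨hjα, ?_⟩
    obtain ⟨hm1, hm2⟩ := ceil_bounds hn hα0 (hx0 j) hjα
    have := (nat_mod_inv ht (by omega) (by omega : ⌈x j / (α / n)⌉₊ - 1 < n)).mp hmod
    omega
  · rintro ⟨hjα, hm⟩
    obtain ⟨hm1, hm2⟩ := ceil_bounds hn hα0 (hx0 j) hjα
    have hmod : (⌈x j / (α / n)⌉₊ - 1 + t) % n = l :=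
      (nat_mod_inv ht (by omega) (by omega : ⌈x j / (α / n)⌉₊ - 1 < n)).mpr (by omega)
    exact ⟨⟨hjα, by omega⟩, hmod⟩

open scoped Classical in
lemma sum_a {n : ℕ} {α : ℝ} (hn : 0 < n) (hα0 : 0 < α) {x : Fin n → ℝ}
    (hx0 : ∀ j, 0 < x j) :
    ∑ q ∈ range n, (univ.filter (fun j => x j < α ∧ ⌈x j / (α / n)⌉₊ = q % n + 1)).card
      = (univ.filter (fun j => x j < α)).card := by
  symm
  rw [Finset.card_eq_sum_card_fiberwise
    (f := fun j => ⌈x j / (α / n)⌉₊ - 1) (t := range n)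
    (by
      intro j hj
      rw [Finset.mem_coe, Finset.mem_filter] at hj
      obtain ⟨hm1, hm2⟩ := ceil_bounds hn hα0 (hx0 j) hj.2
      simp only [Finset.mem_coe, Finset.mem_range]
      omega)]
  apply Finset.sum_congr rfl
  intro q hq
  rw [Finset.mem_range] at hq
  congr 1
  rw [Finset.filter_filter]
  apply Finset.filter_congr
  intro j _
  rw [Nat.mod_eq_of_lt hq]
  constructor
  · rintro ⟨hjα, hm⟩
    obtain ⟨hm1, _⟩ := ceil_bounds hn hα0 (hx0 j) hjα
    exact ⟨hjα, by omega⟩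
  · rintro ⟨hjα, hm⟩
    exact ⟨hjα, by omega⟩

open scoped Classical in
lemma count_bad {n : ℕ} {α : ℝ} (hn : 0 < n) (hα0 : 0 < α) {x : Fin n → ℝ}
    (hx0 : ∀ j, 0 < x j) (hxne : ∀ j, ∀ q : ℕ, q ≤ n → x j ≠ q * (α / n)) :
    ((range n).filter (fun t => ∃ i ∈ Icc 1 n,
        i ≤ (univ.filter (fun j => rot n α t (x j) ≤ (i : ℝ) * α / n)).card)).card
      = (univ.filter (fun j => x j < α)).card := by
  set a : ℕ → ℕ :=
    fun q => (univ.filter (fun j => x j < α ∧ ⌈x j / (α / n)⌉₊ = q % n + 1)).card with ha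
  have hper : ∀ q, a (q + n) = a q := by
    intro q
    simp only [ha, Nat.add_mod_right]
  have hsum : ∑ q ∈ range n, a q = (univ.filter (fun j => x j < α)).card :=
    sum_a hn hα0 hx0
  have hk : (univ.filter (fun j => x j < α)).card ≤ n := by
    calc (univ.filter (fun j => x j < α)).card ≤ (univ : Finset (Fin n)).card :=
      Finset.card_filter_le _ _
    _ = n := by simp
  have hset : ((range n).filter (fun t => ∃ i ∈ Icc 1 n,
      i ≤ (univ.filter (fun j => rot n α t (x j) ≤ (i : ℝ) * α / n)).card))
      = ((range n).filter (fun t => ∃ i ∈ Icc 1 n, i ≤ ∑ l ∈ range i, a (l + (n - t)))) := by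
    ext t
    simp only [Finset.mem_filter, Finset.mem_range]
    constructor
    · rintro ⟨htmem, i, hi, hcard⟩
      rw [Finset.mem_Icc] at hi
      refine ⟨htmem, i, by rw [Finset.mem_Icc]; exact hi, ?_⟩
      rwa [← card_filter_rot hn hα0 hx0 hxne htmem hi.1 hi.2]
    · rintro ⟨htmem, i, hi, hcard⟩
      rw [Finset.mem_Icc] at hi
      refine ⟨htmem, i, by rw [Finset.mem_Icc]; exact hi, ?_⟩
      rwa [card_filter_rot hn hα0 hx0 hxne htmem hi.1 hi.2]
  rw [hset, card_bad hn hper hsum hk]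

end Simes

namespace Simes
open MeasureTheory Finset

variable {n : ℕ} {α : ℝ}

lemma isProb_rho : IsProbabilityMeasure (volume.restrict (Set.Ioo (0:ℝ) 1)) := by
  constructor
  rw [Measure.restrict_apply_univ]
  simp

lemma vol_inter_Ico_Ioo (s : Set ℝ) (a b : ℝ) :
    volume (s ∩ Set.Ico a b) = volume (s ∩ Set.Ioo a b) := by
  apply le_antisymm
  · calc volume (s ∩ Set.Ico a b) ≤ volume ((s ∩ Set.Ioo a b) ∪ {a}) := by
          apply measure_mono
          rintro u ⟨hus, hu1, hu2⟩
          rcases eq_or_lt_of_le hu1 with h | h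
          · right; simp [← h]
          · left; exact ⟨hus, h, hu2⟩
    _ ≤ volume (s ∩ Set.Ioo a b) + volume ({a} : Set ℝ) := measure_union_le _ _
    _ = volume (s ∩ Set.Ioo a b) := by simp
  · exact measure_mono (Set.inter_subset_inter_right _ Set.Ioo_subset_Ico_self)

lemma rot_map_volume (hn : 0 < n) {t : ℕ} (ht : t < n) (hα0 : 0 < α) (hα1 : α < 1) :
    (volume.restrict (Set.Ioo (0:ℝ) 1)).map (rot n α t) = volume.restrict (Set.Ioo (0:ℝ) 1) := by
  have hnR : (0 : ℝ) < n := by exact_mod_cast hn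
  set c : ℝ := α / n with hcdef
  have hc : 0 < c := div_pos hα0 hnR
  set d : ℝ := (t : ℝ) * c with hddef
  have hd0 : 0 ≤ d := by positivity
  have hdα : d < α := by
    have htR : (t : ℝ) ≤ (n : ℝ) - 1 := by
      have : ((t : ℕ) : ℝ) ≤ ((n - 1 : ℕ) : ℝ) := by exact_mod_cast Nat.le_sub_one_of_lt ht
      rw [Nat.cast_sub (by omega)] at this
      exact_mod_cast this
    have : d ≤ ((n : ℝ) - 1) * c := by
      rw [hddef]
      nlinarith
    have hcn : (n : ℝ) * c = α := by rw [hcdef]; field_simp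
    nlinarith
  ext s hs
  rw [Measure.map_apply (measurable_rot n α t) hs, Measure.restrict_apply hs,
    Measure.restrict_apply (by
      exact (measurable_rot n α t) hs)]
  -- decompose the domain
  have hsplit : Set.Ioo (0:ℝ) 1 = Set.Ioo 0 (α - d) ∪ Set.Ico (α - d) α ∪ Set.Ico α 1 := by
    rw [Set.Ioo_union_Ico_eq_Ioo (by linarith) (by linarith),
      Set.Ioo_union_Ico_eq_Ioo (by linarith) (by linarith)]
  have hrotA : ∀ u ∈ Set.Ioo (0:ℝ) (α - d), rot n α t u = u + d := by
    intro u hu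
    rw [rot, if_pos]
    rw [← hcdef, ← hddef]
    exact hu.2
  have hrotB : ∀ u ∈ Set.Ico (α - d) α, rot n α t u = u + d - α := by
    intro u hu
    rw [rot, if_neg, if_pos hu.2]
    rw [← hcdef, ← hddef]
    push_neg
    exact hu.1
  have hrotC : ∀ u ∈ Set.Ico α (1:ℝ), rot n α t u = u := by
    intro u hu
    rw [rot, if_neg, if_neg]
    · push_neg; exact hu.1
    · push_neg; rw [← hcdef, ← hddef]; linarith [hu.1]
  have hA : rot n α t ⁻¹' s ∩ Set.Ioo 0 (α - d) = (· + d) ⁻¹' (s ∩ Set.Ioo d α) := by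
    ext u
    simp only [Set.mem_inter_iff, Set.mem_preimage, Set.mem_Ioo]
    constructor
    · rintro ⟨hus, hu⟩
      rw [hrotA u hu] at hus
      exact ⟨hus, by linarith [hu.1], by linarith [hu.2]⟩
    · rintro ⟨hus, hu1, hu2⟩
      have hu : u ∈ Set.Ioo (0:ℝ) (α - d) := ⟨by linarith, by linarith⟩
      exact ⟨by rw [hrotA u hu]; exact hus, hu⟩
  have hB : rot n α t ⁻¹' s ∩ Set.Ico (α - d) α = (· + (d - α)) ⁻¹' (s ∩ Set.Ico 0 d) := by
    ext u
    simp only [Set.mem_inter_iff, Set.mem_preimage, Set.mem_Ico]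
    constructor
    · rintro ⟨hus, hu⟩
      rw [hrotB u hu] at hus
      refine ⟨by rw [show u + (d - α) = u + d - α by ring]; exact hus, by linarith [hu.1],
        by linarith [hu.2]⟩
    · rintro ⟨hus, hu1, hu2⟩
      have hu : u ∈ Set.Ico (α - d) α := ⟨by linarith, by linarith⟩
      refine ⟨by rw [hrotB u hu, show u + d - α = u + (d - α) by ring]; exact hus, hu⟩
  have hC : rot n α t ⁻¹' s ∩ Set.Ico α 1 = s ∩ Set.Ico α 1 := by
    ext u
    simp only [Set.mem_inter_iff, Set.mem_preimage]
    constructor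
    · rintro ⟨hus, hu⟩
      rw [hrotC u hu] at hus
      exact ⟨hus, hu⟩
    · rintro ⟨hus, hu⟩
      exact ⟨by rw [hrotC u hu]; exact hus, hu⟩
  have hmeas_pre : MeasurableSet (rot n α t ⁻¹' s) := (measurable_rot n α t) hs
  -- LHS splits into three pieces
  have hLHS : volume (rot n α t ⁻¹' s ∩ Set.Ioo 0 1)
      = volume (s ∩ Set.Ioo d α) + volume (s ∩ Set.Ico 0 d) + volume (s ∩ Set.Ico α 1) := by
    rw [hsplit, Set.inter_union_distrib_left, Set.inter_union_distrib_left]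
    rw [measure_union, measure_union]
    · rw [hA, hB, hC,
        measure_preimage_add_right volume d (s ∩ Set.Ioo d α),
        measure_preimage_add_right volume (d - α) (s ∩ Set.Ico 0 d)]
    · apply Set.disjoint_left.mpr
      rintro u ⟨-, -, hu2⟩ ⟨-, hu3, -⟩
      linarith
    · exact (hmeas_pre.inter measurableSet_Ico)
    · apply Set.disjoint_left.mpr
      rintro u hu ⟨-, hu3, -⟩
      rcases hu with ⟨-, -, h2⟩ | ⟨-, -, h2⟩ <;> linarith
    · exact (hmeas_pre.inter measurableSet_Ico)
  have hRHS : volume (s ∩ Set.Ioo 0 1)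
      = volume (s ∩ Set.Ico 0 d) + volume (s ∩ Set.Ioo d α) + volume (s ∩ Set.Ico α 1) := by
    rw [← vol_inter_Ico_Ioo s 0 1,
      show Set.Ico (0:ℝ) 1 = Set.Ico 0 d ∪ Set.Ico d α ∪ Set.Ico α 1 by
        rw [Set.Ico_union_Ico_eq_Ico (by linarith) (by linarith),
          Set.Ico_union_Ico_eq_Ico (by linarith) (by linarith)],
      Set.inter_union_distrib_left, Set.inter_union_distrib_left]
    rw [measure_union, measure_union]
    · rw [vol_inter_Ico_Ioo s d α]
    · apply Set.disjoint_left.mpr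
      rintro u ⟨-, -, hu2⟩ ⟨-, hu3, -⟩
      linarith
    · exact (hs.inter measurableSet_Ico)
    · apply Set.disjoint_left.mpr
      rintro u hu ⟨-, hu3, -⟩
      rcases hu with ⟨-, -, h2⟩ | ⟨-, -, h2⟩ <;> linarith
    · exact (hs.inter measurableSet_Ico)
  rw [hLHS, hRHS]
  ring

end Simes

namespace Simes
open MeasureTheory Finset

variable {n : ℕ} {α : ℝ}

/-- Coordinatewise rotation map. -/
noncomputable def Tr (n : ℕ) (α : ℝ) (t : ℕ) (x : Fin n → ℝ) : Fin n → ℝ :=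
  fun j => rot n α t (x j)

lemma measurable_Tr (t : ℕ) : Measurable (Tr n α t) :=
  measurable_pi_lambda _ fun j => (measurable_rot n α t).comp (measurable_pi_apply j)

lemma Tr_map_pi (hn : 0 < n) {t : ℕ} (ht : t < n) (hα0 : 0 < α) (hα1 : α < 1) :
    (Measure.pi fun _ : Fin n => volume.restrict (Set.Ioo (0:ℝ) 1)).map (Tr n α t)
      = Measure.pi fun _ : Fin n => volume.restrict (Set.Ioo (0:ℝ) 1) := by
  haveI : IsProbabilityMeasure (volume.restrict (Set.Ioo (0:ℝ) 1)) := isProb_rho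
  refine (Measure.pi_eq fun s hs => ?_).symm
  rw [Measure.map_apply (measurable_Tr t) (MeasurableSet.univ_pi hs)]
  have hpre : Tr n α t ⁻¹' Set.pi Set.univ s = Set.pi Set.univ fun j => rot n α t ⁻¹' s j := by
    ext x
    simp [Tr, Set.mem_pi]
  rw [hpre, Measure.pi_pi]
  apply Finset.prod_congr rfl
  intro j _
  rw [← Measure.map_apply (measurable_rot n α t) (hs j), rot_map_volume hn ht hα0 hα1]

lemma pi_eval (B : Set ℝ) (hB : MeasurableSet B) (j : Fin n) :
    (Measure.pi fun _ : Fin n => volume.restrict (Set.Ioo (0:ℝ) 1)) {x | x j ∈ B}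
      = volume.restrict (Set.Ioo (0:ℝ) 1) B := by
  haveI : IsProbabilityMeasure (volume.restrict (Set.Ioo (0:ℝ) 1)) := isProb_rho
  have hset : {x : Fin n → ℝ | x j ∈ B}
      = Set.pi Set.univ (Function.update (fun _ : Fin n => (Set.univ : Set ℝ)) j B) := by
    ext x
    simp only [Set.mem_setOf_eq, Set.mem_pi, Set.mem_univ, true_implies]
    constructor
    · intro h j'
      rcases eq_or_ne j' j with rfl | hne
      · rwa [Function.update_self]
      · rw [Function.update_of_ne hne]; trivial
    · intro h
      have := h j
      rwa [Function.update_self] at this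
  rw [hset, Measure.pi_pi]
  rw [Fintype.prod_eq_single j]
  · rw [Function.update_self]
  · intro j' hne
    rw [Function.update_of_ne hne]
    simp

end Simes

namespace Simes
open MeasureTheory Finset

variable {n : ℕ} {α : ℝ}

lemma ae_generic (hn : 0 < n) :
    ∀ᵐ x ∂(Measure.pi fun _ : Fin n => volume.restrict (Set.Ioo (0:ℝ) 1)),
      ∀ j, 0 < x j ∧ ∀ q : ℕ, q ≤ n → x j ≠ q * (α / n) := by
  set B : Set ℝ := (Set.Ioo (0:ℝ) 1)ᶜ ∪ ⋃ q ∈ Set.Iic n, {((q : ℕ) : ℝ) * (α / n)} with hB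
  have hBmeas : MeasurableSet B := by
    apply MeasurableSet.union
    · exact measurableSet_Ioo.compl
    · exact MeasurableSet.biUnion (Set.to_countable _) fun q _ => measurableSet_singleton _
  have hBnull : volume.restrict (Set.Ioo (0:ℝ) 1) B = 0 := by
    rw [hB]
    apply measure_union_null
    · rw [Measure.restrict_apply (measurableSet_Ioo.compl)]
      simp
    · apply measure_biUnion_null_iff (Set.to_countable _) |>.mpr
      intro q _
      rw [Measure.restrict_apply (measurableSet_singleton _)]
      exact measure_mono_null Set.inter_subset_left (Real.volume_singleton)
  rw [ae_iff]
  refine measure_mono_null (fun x hx => ?_)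
    (measure_iUnion_null (s := fun j : Fin n => {x : Fin n → ℝ | x j ∈ B}) fun j => by
      rw [pi_eval B hBmeas j, hBnull])
  · 
    simp only [Set.mem_setOf_eq, not_forall] at hx
    obtain ⟨j, hj⟩ := hx
    rw [Set.mem_iUnion]
    refine ⟨j, ?_⟩
    simp only [Set.mem_setOf_eq, hB]
    rw [not_and_or] at hj
    rcases hj with h | h
    · left
      intro hmem
      exact h hmem.1
    · push_neg at h
      obtain ⟨q, hq, he⟩ := h
      right
      rw [Set.mem_iUnion₂]
      exact ⟨q, hq, he⟩

end Simes

open Finset MeasureTheory ProbabilityTheory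
open scoped ENNReal

/-- Simes' identity: if `P₁,…,Pₙ` are i.i.d. uniform(0,1), then
`Pr{P_{i:n} ≤ iα/n for at least one i = 1,…,n} = α` for any `0 < α < 1`. -/
theorem stmt18 {Ω : Type*} [MeasurableSpace Ω] (μ : Measure Ω) [IsProbabilityMeasure μ]
    (n : ℕ) (hn : 1 ≤ n)
    (P : Fin n → Ω → ℝ) (hmeas : ∀ i, Measurable (P i))
    (hindep : iIndepFun P μ)
    (hunif : ∀ i, Measure.map (P i) μ = volume.restrict (Set.Ioo (0 : ℝ) 1))
    (α : ℝ) (hα0 : 0 < α) (hα1 : α < 1) :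
    μ (⋃ i ∈ Finset.Icc 1 n,
        {ω | i ≤ (Finset.univ.filter fun j => P j ω ≤ (i : ℝ) * α / n).card}) =
      ENNReal.ofReal α := by
  classical
  have hn0 : 0 < n := hn
  haveI : IsProbabilityMeasure (volume.restrict (Set.Ioo (0:ℝ) 1)) := Simes.isProb_rho
  set ν : Measure (Fin n → ℝ) := Measure.pi fun _ : Fin n => volume.restrict (Set.Ioo (0:ℝ) 1)
    with hν
  set E : Set (Fin n → ℝ) :=
    ⋃ i ∈ Finset.Icc 1 n, {x | i ≤ (Finset.univ.filter fun j => x j ≤ (i : ℝ) * α / n).card}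
    with hE
  have hEmeas : MeasurableSet E := by
    apply MeasurableSet.biUnion (Finset.Icc 1 n).countable_toSet
    intro i _
    have hcard : Measurable fun x : Fin n → ℝ =>
        (Finset.univ.filter fun j => x j ≤ (i : ℝ) * α / n).card := by
      simp only [Finset.card_filter]
      apply Finset.measurable_sum
      intro j _
      exact Measurable.ite
        (measurableSet_le (measurable_pi_apply j) measurable_const)
        measurable_const measurable_const
    exact hcard MeasurableSet.of_discrete
  have hTuple : Measurable fun ω (j : Fin n) => P j ω := measurable_pi_lambda _ hmeas
  have hset : (⋃ i ∈ Finset.Icc 1 n,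
      {ω | i ≤ (Finset.univ.filter fun j => P j ω ≤ (i : ℝ) * α / n).card})
      = (fun ω (j : Fin n) => P j ω) ⁻¹' E := by
    rw [hE]
    ext ω
    simp only [Set.mem_iUnion, Set.mem_setOf_eq, Set.mem_preimage]
  have hmap : μ.map (fun ω (j : Fin n) => P j ω) = ν := by
    rw [hν]
    refine (Measure.pi_eq fun s hs => ?_).symm
    rw [Measure.map_apply hTuple (MeasurableSet.univ_pi hs)]
    have hpre : (fun ω (j : Fin n) => P j ω) ⁻¹' Set.pi Set.univ s = ⋂ j, P j ⁻¹' s j := by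
      ext ω
      simp [Set.mem_pi]
    rw [hpre, hindep.meas_iInter (fun j => ⟨s j, hs j, rfl⟩)]
    exact Finset.prod_congr rfl fun j _ => by
      rw [← hunif j, Measure.map_apply (hmeas j) (hs j)]
  have hμE : μ (⋃ i ∈ Finset.Icc 1 n,
      {ω | i ≤ (Finset.univ.filter fun j => P j ω ≤ (i : ℝ) * α / n).card}) = ν E := by
    rw [hset, ← Measure.map_apply hTuple hEmeas, hmap]
  rw [hμE]
  -- measurability of the rotated preimages
  have hTrpre : ∀ t : ℕ, MeasurableSet (Simes.Tr n α t ⁻¹' E) :=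
    fun t => Simes.measurable_Tr t hEmeas
  have hTmap : ∀ t, t < n → ν (Simes.Tr n α t ⁻¹' E) = ν E := by
    intro t ht
    rw [← Measure.map_apply (Simes.measurable_Tr t) hEmeas, hν,
      Simes.Tr_map_pi hn0 ht hα0 hα1]
  have hmemE : ∀ (x : Fin n → ℝ) (t : ℕ), (Simes.Tr n α t x ∈ E) ↔
      ∃ i ∈ Finset.Icc 1 n,
        i ≤ (Finset.univ.filter fun j => Simes.rot n α t (x j) ≤ (i : ℝ) * α / n).card := by
    intro x t
    rw [hE]
    simp only [Set.mem_iUnion, Set.mem_setOf_eq]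
    exact ⟨fun ⟨i, hi, h⟩ => ⟨i, hi, h⟩, fun ⟨i, hi, h⟩ => ⟨i, hi, h⟩⟩
  -- pointwise a.e. identity between the two indicator sums
  have hae : (fun x => ∑ t ∈ Finset.range n,
        (Simes.Tr n α t ⁻¹' E).indicator (1 : (Fin n → ℝ) → ℝ≥0∞) x)
      =ᵐ[ν] (fun x => ∑ j : Fin n,
        ({y : Fin n → ℝ | y j < α}).indicator (1 : (Fin n → ℝ) → ℝ≥0∞) x) := by
    filter_upwards [Simes.ae_generic (α := α) hn0] with x hx
    have h1 : ∑ t ∈ Finset.range n,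
        (Simes.Tr n α t ⁻¹' E).indicator (1 : (Fin n → ℝ) → ℝ≥0∞) x
        = (((Finset.range n).filter (fun t => ∃ i ∈ Finset.Icc 1 n,
            i ≤ (Finset.univ.filter fun j =>
              Simes.rot n α t (x j) ≤ (i : ℝ) * α / n).card)).card : ℝ≥0∞) := by
      rw [Finset.card_filter, Nat.cast_sum]
      refine Finset.sum_congr rfl fun t _ => ?_
      rw [Set.indicator_apply]
      simp only [Set.mem_preimage]
      by_cases hmem : Simes.Tr n α t x ∈ E
      · rw [if_pos hmem, if_pos ((hmemE x t).mp hmem)]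
        simp
      · rw [if_neg hmem, if_neg (fun hc => hmem ((hmemE x t).mpr hc))]
        simp
    have h2 : ∑ j : Fin n, ({y : Fin n → ℝ | y j < α}).indicator (1 : (Fin n → ℝ) → ℝ≥0∞) x
        = ((Finset.univ.filter fun j : Fin n => x j < α).card : ℝ≥0∞) := by
      rw [Finset.card_filter, Nat.cast_sum]
      refine Finset.sum_congr rfl fun j _ => ?_
      rw [Set.indicator_apply]
      by_cases hmem : x j < α
      · rw [if_pos (show x ∈ {y : Fin n → ℝ | y j < α} from hmem), if_pos hmem]
        simp
      · rw [if_neg (show x ∉ {y : Fin n → ℝ | y j < α} from hmem), if_neg hmem]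
        simp
    rw [h1, h2]
    congr 1
    exact_mod_cast Simes.count_bad hn0 hα0 (fun j => (hx j).1) (fun j q hq => (hx j).2 q hq)
  -- compute both integrals
  have hsum1 : (n : ℝ≥0∞) * ν E = ∫⁻ x, ∑ t ∈ Finset.range n,
      (Simes.Tr n α t ⁻¹' E).indicator (1 : (Fin n → ℝ) → ℝ≥0∞) x ∂ν := by
    calc (n : ℝ≥0∞) * ν E = ∑ t ∈ Finset.range n, ν (Simes.Tr n α t ⁻¹' E) := by
          rw [Finset.sum_congr rfl (fun t ht => hTmap t (Finset.mem_range.mp ht)),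
            Finset.sum_const, Finset.card_range, nsmul_eq_mul]
    _ = ∑ t ∈ Finset.range n,
          ∫⁻ x, (Simes.Tr n α t ⁻¹' E).indicator (1 : (Fin n → ℝ) → ℝ≥0∞) x ∂ν :=
        Finset.sum_congr rfl fun t _ => (lintegral_indicator_one (hTrpre t)).symm
    _ = ∫⁻ x, ∑ t ∈ Finset.range n,
          (Simes.Tr n α t ⁻¹' E).indicator (1 : (Fin n → ℝ) → ℝ≥0∞) x ∂ν :=
        (lintegral_finset_sum _ (fun t _ => measurable_const.indicator (hTrpre t))).symm
  have hsum2 : ∫⁻ x, ∑ j : Fin n,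
      ({y : Fin n → ℝ | y j < α}).indicator (1 : (Fin n → ℝ) → ℝ≥0∞) x ∂ν
      = (n : ℝ≥0∞) * ENNReal.ofReal α := by
    have hjm : ∀ j : Fin n, MeasurableSet {y : Fin n → ℝ | y j < α} :=
      fun j => measurableSet_lt (measurable_pi_apply j) measurable_const
    have hone : ∀ j ∈ (Finset.univ : Finset (Fin n)),
        ∫⁻ x, ({y : Fin n → ℝ | y j < α}).indicator (1 : (Fin n → ℝ) → ℝ≥0∞) x ∂ν
          = ENNReal.ofReal α := by
      intro j _
      rw [lintegral_indicator_one (hjm j)]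
      have he0 : {y : Fin n → ℝ | y j < α} = {y : Fin n → ℝ | y j ∈ Set.Iio α} := rfl
      rw [hν, he0, Simes.pi_eval _ measurableSet_Iio j,
        Measure.restrict_apply measurableSet_Iio]
      have hie : Set.Iio α ∩ Set.Ioo 0 1 = Set.Ioo 0 α := by
        ext u
        simp only [Set.mem_inter_iff, Set.mem_Iio, Set.mem_Ioo]
        constructor
        · rintro ⟨h1, h2, h3⟩; exact ⟨h2, h1⟩
        · rintro ⟨h1, h2⟩; exact ⟨h2, h1, by linarith⟩
      rw [hie, Real.volume_Ioo, sub_zero]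
    calc ∫⁻ x, ∑ j : Fin n,
        ({y : Fin n → ℝ | y j < α}).indicator (1 : (Fin n → ℝ) → ℝ≥0∞) x ∂ν
        = ∑ j : Fin n,
          ∫⁻ x, ({y : Fin n → ℝ | y j < α}).indicator (1 : (Fin n → ℝ) → ℝ≥0∞) x ∂ν :=
        lintegral_finset_sum _ (fun j _ => measurable_const.indicator (hjm j))
    _ = ∑ _j : Fin n, ENNReal.ofReal α := Finset.sum_congr rfl hone
    _ = (n : ℝ≥0∞) * ENNReal.ofReal α := by
        rw [Finset.sum_const, Finset.card_univ, Fintype.card_fin, nsmul_eq_mul]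
  have hkey : (n : ℝ≥0∞) * ν E = (n : ℝ≥0∞) * ENNReal.ofReal α := by
    rw [hsum1, lintegral_congr_ae hae, hsum2]
  have hne0 : (n : ℝ≥0∞) ≠ 0 := by
    simp only [ne_eq, Nat.cast_eq_zero]
    omega
  exact (ENNReal.mul_right_inj hne0 (ENNReal.natCast_ne_top n)).mp hkey
end
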